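/- arXiv:2604.12606 — 7 statements merged into one kernel-verified Lean document; each statement's English description precedes it below -/
import Mathlib

section
/- Let G be a finite simple graph and v ∈ V(G) a vertex such that N_G(v) is a clique. Then for every u ∈ N_G(v), every independent set of G − N_G[u] is also an independent set of G − N_G[v]; that is, I(G − N_G[u]) ⊆ I(G − N_G[v]). -/
open Finset

/-- A (nonempty-face) abstract simplicial complex on vertex set `V`:
faces are nonempty finite sets, closed under nonempty subsets. -/
def IsComplex {V : Type*} (X : Set (Finset V)) : Prop :=
  (∀ s ∈ X, s.Nonempty) ∧ ∀ ⦃s t : Finset V⦄, s ∈ X → t ⊆ s → t.Nonempty → t ∈ X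

/-- Nonempty independent sets of `G` avoiding the vertex set `U`;
this is the set of simplices of the independence complex `I(G − U)`. -/
def avoidIndep {V : Type*} (G : SimpleGraph V) (U : Set V) : Set (Finset V) :=
  {s | s.Nonempty ∧ (∀ x ∈ s, x ∉ U) ∧ ∀ x ∈ s, ∀ y ∈ s, ¬ G.Adj x y}

/-- The independence complex of `G` (set of nonempty simplices). -/
def indepComplex {V : Type*} (G : SimpleGraph V) : Set (Finset V) :=
  avoidIndep G ∅

/-- A matching on the Hasse diagram of a simplicial complex `X`. -/
structure IsMatching {V : Type*} (X : Set (Finset V)) (M : Set (Finset V × Finset V)) : Prop where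
  left_mem : ∀ p ∈ M, p.1 ∈ X
  right_mem : ∀ p ∈ M, p.2 ∈ X
  subset : ∀ p ∈ M, p.1 ⊆ p.2
  card_eq : ∀ p ∈ M, p.2.card = p.1.card + 1
  eq_of_shared : ∀ p ∈ M, ∀ q ∈ M,
    p.1 = q.1 ∨ p.1 = q.2 ∨ p.2 = q.1 ∨ p.2 = q.2 → p = q

/-- One step of the modified Hasse diagram: matched edges are reversed (point upwards),
all other Hasse edges point from a simplex to its codimension-1 faces. -/
def matchStep {V : Type*} (X : Set (Finset V)) (M : Set (Finset V × Finset V))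
    (σ τ : Finset V) : Prop :=
  σ ∈ X ∧ τ ∈ X ∧
    ((σ, τ) ∈ M ∨ (τ ⊆ σ ∧ σ.card = τ.card + 1 ∧ (τ, σ) ∉ M))

/-- An acyclic matching: reversing matched edges leaves the Hasse diagram acyclic. -/
def IsAcyclicMatching {V : Type*} (X : Set (Finset V)) (M : Set (Finset V × Finset V)) : Prop :=
  IsMatching X M ∧ ∀ σ, ¬ Relation.TransGen (matchStep X M) σ σ

/-- A critical (unmatched) simplex. -/
def IsCritical {V : Type*} (X : Set (Finset V)) (M : Set (Finset V × Finset V))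
    (σ : Finset V) : Prop :=
  σ ∈ X ∧ ∀ p ∈ M, p.1 ≠ σ ∧ p.2 ≠ σ

/-- The number of `d`-dimensional critical simplices. -/
noncomputable def critCount {V : Type*} (X : Set (Finset V)) (M : Set (Finset V × Finset V))
    (d : ℕ) : ℕ :=
  {σ | IsCritical X M σ ∧ σ.card = d + 1}.ncard

/-- A complex is collapsible if it admits an acyclic matching with a unique critical simplex. -/
def Collapsible {V : Type*} (X : Set (Finset V)) : Prop :=
  ∃ M, IsAcyclicMatching X M ∧ ∃! σ, IsCritical X M σ

/-- A maximal face of a complex. -/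
def IsMaximalFace {V : Type*} (X : Set (Finset V)) (σ : Finset V) : Prop :=
  σ ∈ X ∧ ∀ τ ∈ X, σ ⊆ τ → σ = τ

/-- All critical simplices of the matching are maximal faces,
except possibly a single critical 0-simplex. -/
def ExceptOneMaximal {V : Type*} (X : Set (Finset V)) (M : Set (Finset V × Finset V)) : Prop :=
  (∀ σ, IsCritical X M σ → ¬ IsMaximalFace X σ → σ.card = 1) ∧
  (∀ σ τ, IsCritical X M σ → IsCritical X M τ →
    ¬ IsMaximalFace X σ → ¬ IsMaximalFace X τ → σ = τ)

/-- The geometric realization of a complex, as a subspace of `V → ℝ`. -/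
def realizationSet {V : Type*} (X : Set (Finset V)) : Set (V → ℝ) :=
  {f | (∀ v, 0 ≤ f v) ∧ ∃ s ∈ X, (∀ v, f v ≠ 0 ↔ v ∈ s) ∧ ∑ v ∈ s, f v = 1}

/-- The base point of the `d`-dimensional unit sphere. -/
noncomputable def spherePt (d : ℕ) : Metric.sphere (0 : EuclideanSpace ℝ (Fin (d+1))) 1 :=
  ⟨EuclideanSpace.single 0 1, by simp⟩

/-- Identify all base points of the given spheres with a single external point. -/
noncomputable def WedgeRel (c : ℕ → ℕ) :
    (Unit ⊕ Σ d : ℕ, Fin (c d) × Metric.sphere (0 : EuclideanSpace ℝ (Fin (d+1))) 1) →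
    (Unit ⊕ Σ d : ℕ, Fin (c d) × Metric.sphere (0 : EuclideanSpace ℝ (Fin (d+1))) 1) → Prop :=
  fun x y => ∃ d i, x = Sum.inr ⟨d, i, spherePt d⟩ ∧ y = Sum.inl ()

/-- The wedge of spheres with `c d` spheres of dimension `d` (a point if all `c d = 0`). -/
noncomputable def WedgeOfSpheres (c : ℕ → ℕ) : Type :=
  Quot (WedgeRel c)

noncomputable instance (c : ℕ → ℕ) : TopologicalSpace (WedgeOfSpheres c) :=
  instTopologicalSpaceQuot

/-- A universal vertex: adjacent to every other vertex. -/
def IsUniversal {V : Type*} (G : SimpleGraph V) (u : V) : Prop :=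
  ∀ w, w ≠ u → G.Adj u w

/-- A chordal graph: no induced cycle of length at least 4. -/
def Chordal {W : Type*} (H : SimpleGraph W) : Prop :=
  ¬ ∃ n, 4 ≤ n ∧ ∃ f : ZMod n → W, Function.Injective f ∧
    ∀ i j, H.Adj (f i) (f j) ↔ (j = i + 1 ∨ i = j + 1)

/-- The domination number of a graph. -/
noncomputable def dominationNumber {V : Type*} (G : SimpleGraph V) : ℕ :=
  sInf {n | ∃ S : Finset V, S.card = n ∧ ∀ w, w ∉ S → ∃ x ∈ S, G.Adj x w}

/-- `G` belongs to the family `𝒢 m n`: the blocks are the fibres of `P`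
(all nonempty, i.e. `P` surjective), and two distinct vertices are adjacent
iff their block indices are comparable in the product order. -/
def GridGraph {V : Type*} (m n : ℕ) (G : SimpleGraph V)
    (P : V → Fin (m+1) × Fin (n+1)) : Prop :=
  Function.Surjective P ∧ ∀ x y, G.Adj x y ↔ x ≠ y ∧ (P x ≤ P y ∨ P y ≤ P x)

/-- The closed neighbourhood `N_G[v]`. -/
def closedNbhd {V : Type*} (G : SimpleGraph V) (v : V) : Set V :=
  insert v (G.neighborSet v)

/-- Independent sets of `G` (including `∅`) avoiding the vertex set `U`;
the full set of simplices (with the empty simplex) of `I(G − U)`. -/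
def avoidIndepE {V : Type*} (G : SimpleGraph V) (U : Set V) : Set (Finset V) :=
  {s | (∀ x ∈ s, x ∉ U) ∧ ∀ x ∈ s, ∀ y ∈ s, ¬ G.Adj x y}

/-- The independence complex of `G`, including the empty simplex. -/
def indepComplexE {V : Type*} (G : SimpleGraph V) : Set (Finset V) :=
  avoidIndepE G ∅
theorem stmt_2 {V : Type*} [Fintype V] [DecidableEq V] (G : SimpleGraph V) (v : V)
    (hclique : ∀ x ∈ G.neighborSet v, ∀ y ∈ G.neighborSet v, x ≠ y → G.Adj x y) :
    ∀ u ∈ G.neighborSet v,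
      avoidIndepE G (closedNbhd G u) ⊆ avoidIndepE G (closedNbhd G v) := by
  intro u hu s hs
  obtain ⟨havoid, hind⟩ := hs
  refine ⟨?_, hind⟩
  intro x hx hxv
  rcases hxv with rfl | hxN
  · exact havoid x hx (Set.mem_insert_iff.2 (Or.inr ((G.adj_comm _ _).1 hu)))
  · by_cases hxu : x = u
    · exact havoid x hx (Set.mem_insert_iff.2 (Or.inl hxu))
    · exact havoid x hx (Set.mem_insert_iff.2 (Or.inr ((G.adj_comm _ _).1
        (hclique x hxN u hu hxu))))
end

section
/- Let G be a finite simple graph and v a vertex with N_G(v) a clique. Then the set of simplices of I(G) is the disjoint union of: (a) ⋃_{u ∈ N_G(v)} I(G − N_G[u]); (b) I(G − N_G[v]) minus the union in (a); (c) for each u ∈ N_G(v), the sets {α ∪ {u} : α ∈ I(G − N_G[u])}; and (d) {α ∪ {v} : α ∈ I(G − N_G[v])}, where the families in (c) for distinct u are pairwise disjoint and disjoint from (a), (b), (d). -/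
open Finset

/-!
An independent set `σ` meets the clique `N_G[v]` in at most one vertex. If it contains `w`, then
`σ = (σ \ {w}) ∪ {w}` with `σ \ {w} ∈ I(G − N_G[w])`; this gives the families (c) and (d). If it
meets `N_G[v]` nowhere, then `σ ∈ I(G − N_G[v])`, and this complex is (a) ∪ (b) because
`N_G[v] ⊆ N_G[u]` for every `u ∈ N_G(v)`, so that each `I(G − N_G[u])` lies inside it.
-/

namespace SimpleGraph

variable {V : Type*} (G : SimpleGraph V)

lemma self_mem_closedNbhd (w : V) : w ∈ closedNbhd G w :=
  Set.mem_insert w _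

lemma mem_closedNbhd_of_adj {w x : V} (h : G.Adj w x) : x ∈ closedNbhd G w :=
  Set.mem_insert_of_mem w h

lemma closedNbhd_subset_closedNbhd_of_isClique {v u : V}
    (hclique : (G.neighborSet v).Pairwise G.Adj) (hu : u ∈ G.neighborSet v) :
    closedNbhd G v ⊆ closedNbhd G u := by
  rintro x (rfl | hx)
  · exact G.mem_closedNbhd_of_adj (G.adj_symm hu)
  · obtain rfl | hne := eq_or_ne x u
    · exact G.self_mem_closedNbhd x
    · exact G.mem_closedNbhd_of_adj (hclique hu hx hne.symm)

lemma mem_avoidIndepE_iff {U : Set V} {s : Finset V} :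
    s ∈ avoidIndepE G U ↔ s ∈ indepComplexE G ∧ ∀ x ∈ s, x ∉ U :=
  ⟨fun hs => ⟨⟨fun _ _ => Set.notMem_empty _, hs.2⟩, hs.1⟩, fun hs => ⟨hs.2, hs.1.2⟩⟩

lemma avoidIndepE_anti {U U' : Set V} (h : U ⊆ U') : avoidIndepE G U' ⊆ avoidIndepE G U :=
  fun _ hs => ⟨fun x hx hxU => hs.1 x hx (h hxU), hs.2⟩

lemma disjoint_avoidIndepE_of_mem {U : Set V} {w : V} (hw : w ∈ U) :
    Disjoint (avoidIndepE G U) {s | w ∈ s} :=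
  Set.disjoint_left.2 fun _ hs hws => hs.1 w hws hw

lemma disjoint_of_adj {w x : V} (h : G.Adj w x) :
    Disjoint {s | s ∈ indepComplexE G ∧ w ∈ s} {s | s ∈ indepComplexE G ∧ x ∈ s} :=
  Set.disjoint_left.2 fun _ hw hx => hw.1.2 w hw.2 x hx.2 h

lemma indepComplexE_eq_union (v : V) :
    indepComplexE G = avoidIndepE G (closedNbhd G v) ∪
      (⋃ u ∈ G.neighborSet v, {s | s ∈ indepComplexE G ∧ u ∈ s}) ∪
      {s | s ∈ indepComplexE G ∧ v ∈ s} := by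
  refine subset_antisymm (fun s hs => ?_) ?_
  · by_cases hv : v ∈ s
    · exact Or.inr ⟨hs, hv⟩
    by_cases hu : ∃ u ∈ G.neighborSet v, u ∈ s
    · obtain ⟨u, hu, hus⟩ := hu
      exact Or.inl (Or.inr (Set.mem_iUnion₂.2 ⟨u, hu, hs, hus⟩))
    push Not at hu
    refine Or.inl (Or.inl (G.mem_avoidIndepE_iff.2 ⟨hs, ?_⟩))
    rintro x hx (rfl | hvx)
    exacts [hv hx, hu x hvx hx]
  · refine Set.union_subset (Set.union_subset ?_ ?_) fun s hs => hs.1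
    · exact fun s hs => (G.mem_avoidIndepE_iff.1 hs).1
    · exact Set.iUnion₂_subset fun u _ s hs => hs.1

variable [DecidableEq V]

lemma image_insert_avoidIndepE_closedNbhd (w : V) :
    insert w '' avoidIndepE G (closedNbhd G w) = {s | s ∈ indepComplexE G ∧ w ∈ s} := by
  ext s
  constructor
  · rintro ⟨α, hα, rfl⟩
    refine ⟨⟨fun _ _ => Set.notMem_empty _, ?_⟩, mem_insert_self w α⟩
    have hα_nadj : ∀ x ∈ α, ¬ G.Adj w x := fun x hx hwx => hα.1 x hx (G.mem_closedNbhd_of_adj hwx)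
    intro x hx y hy hxy
    rcases mem_insert.1 hx with rfl | hxα <;> rcases mem_insert.1 hy with rfl | hyα
    · exact G.irrefl hxy
    · exact hα_nadj y hyα hxy
    · exact hα_nadj x hxα hxy.symm
    · exact hα.2 x hxα y hyα hxy
  · rintro ⟨hs, hws⟩
    refine ⟨s.erase w, ⟨?_, fun x hx y hy => hs.2 x (mem_of_mem_erase hx) y (mem_of_mem_erase hy)⟩,
      insert_erase hws⟩
    rintro x hx (rfl | hwx)
    · exact notMem_erase x s hx
    · exact hs.2 w hws x (mem_of_mem_erase hx) hwx

end SimpleGraph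

theorem stmt_3_general {V : Type*} [DecidableEq V] (G : SimpleGraph V) (v : V)
    (hclique : ∀ x ∈ G.neighborSet v, ∀ y ∈ G.neighborSet v, x ≠ y → G.Adj x y)
    (A B D : Set (Finset V)) (C : V → Set (Finset V))
    (hA : A = ⋃ u ∈ G.neighborSet v, avoidIndepE G (closedNbhd G u))
    (hB : B = avoidIndepE G (closedNbhd G v) \ A)
    (hC : ∀ u, C u = (fun α => insert u α) '' avoidIndepE G (closedNbhd G u))
    (hD : D = (fun α => insert v α) '' avoidIndepE G (closedNbhd G v)) :
    indepComplexE G = A ∪ B ∪ (⋃ u ∈ G.neighborSet v, C u) ∪ D ∧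
    (∀ u₁ ∈ G.neighborSet v, ∀ u₂ ∈ G.neighborSet v, u₁ ≠ u₂ → Disjoint (C u₁) (C u₂)) ∧
    (∀ u ∈ G.neighborSet v, Disjoint (C u) A ∧ Disjoint (C u) B ∧ Disjoint (C u) D) ∧
    Disjoint A B ∧ Disjoint A D ∧ Disjoint B D := by
  set P := avoidIndepE G (closedNbhd G v)
  replace hC : ∀ u, C u = {s | s ∈ indepComplexE G ∧ u ∈ s} :=
    fun u => (hC u).trans (G.image_insert_avoidIndepE_closedNbhd u)
  replace hD : D = {s | s ∈ indepComplexE G ∧ v ∈ s} :=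
    hD.trans (G.image_insert_avoidIndepE_closedNbhd v)
  have hAB : A ∪ B = P := by
    rw [hB, hA]
    exact Set.union_sdiff_cancel <| Set.iUnion₂_subset fun u hu =>
      G.avoidIndepE_anti (G.closedNbhd_subset_closedNbhd_of_isClique hclique hu)
  have hPC : ∀ u ∈ G.neighborSet v, Disjoint P (C u) := fun u hu =>
    (G.disjoint_avoidIndepE_of_mem (G.mem_closedNbhd_of_adj hu)).mono_right
      (hC u ▸ fun _ hs => hs.2)
  have hPD : Disjoint P D :=
    (G.disjoint_avoidIndepE_of_mem (G.self_mem_closedNbhd v)).mono_right (hD ▸ fun _ hs => hs.2)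
  have hAP : A ⊆ P := hAB ▸ Set.subset_union_left
  have hBP : B ⊆ P := hAB ▸ Set.subset_union_right
  refine ⟨?_, fun u₁ h₁ u₂ h₂ hne => ?_, fun u hu => ⟨?_, ?_, ?_⟩, hB ▸ Set.disjoint_sdiff_right,
    hPD.mono_left hAP, hPD.mono_left hBP⟩
  · simp_rw [hAB, hC, hD]
    exact G.indepComplexE_eq_union v
  · exact hC u₁ ▸ hC u₂ ▸ G.disjoint_of_adj (hclique u₁ h₁ u₂ h₂ hne)
  · exact (hPC u hu).symm.mono_right hAP
  · exact (hPC u hu).symm.mono_right hBP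
  · exact hD ▸ hC u ▸ G.disjoint_of_adj (G.adj_symm hu)

theorem stmt_3 {V : Type*} [Fintype V] [DecidableEq V] (G : SimpleGraph V) (v : V)
    (hclique : ∀ x ∈ G.neighborSet v, ∀ y ∈ G.neighborSet v, x ≠ y → G.Adj x y)
    (A B D : Set (Finset V)) (C : V → Set (Finset V))
    (hA : A = ⋃ u ∈ G.neighborSet v, avoidIndepE G (closedNbhd G u))
    (hB : B = avoidIndepE G (closedNbhd G v) \ A)
    (hC : ∀ u, C u = (fun α => insert u α) '' avoidIndepE G (closedNbhd G u))
    (hD : D = (fun α => insert v α) '' avoidIndepE G (closedNbhd G v)) :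
    indepComplexE G = A ∪ B ∪ (⋃ u ∈ G.neighborSet v, C u) ∪ D ∧
    (∀ u₁ ∈ G.neighborSet v, ∀ u₂ ∈ G.neighborSet v, u₁ ≠ u₂ → Disjoint (C u₁) (C u₂)) ∧
    (∀ u ∈ G.neighborSet v, Disjoint (C u) A ∧ Disjoint (C u) B ∧ Disjoint (C u) D) ∧
    Disjoint A B ∧ Disjoint A D ∧ Disjoint B D :=
  stmt_3_general G v hclique A B D C hA hB hC hD
end

section
/- Let G be a finite simple graph with a vertex v such that {v} ⊊ N_G[v] ⊊ V(G) and N_G[v] is a clique, and let k be the number of universal vertices of G. Then the number of connected components of the independence complex I(G) equals 1 + k. -/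
open Finset

theorem stmt_4 {V : Type*} [Fintype V] [DecidableEq V] (G : SimpleGraph V) (v : V)
    (h1 : ({v} : Set V) ⊂ closedNbhd G v) (h2 : closedNbhd G v ⊂ Set.univ)
    (hclique : ∀ x ∈ closedNbhd G v, ∀ y ∈ closedNbhd G v, x ≠ y → G.Adj x y) :
    Nat.card Gᶜ.ConnectedComponent = 1 + {u | IsUniversal G u}.ncard := by
  classical
  -- universal vertices are isolated in Gᶜ
  have hiso : ∀ u, IsUniversal G u → ∀ w, ¬ Gᶜ.Adj u w := by
    intro u hu w hadj
    rw [SimpleGraph.compl_adj] at hadj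
    exact hadj.2 (hu w (fun h => hadj.1 h.symm))
  have hreach_eq : ∀ u, IsUniversal G u → ∀ x, Gᶜ.Reachable u x → u = x := by
    intro u hu x hr
    obtain ⟨w⟩ := hr
    cases w with
    | nil => rfl
    | cons h _ => exact absurd h (hiso u hu _)
  -- a vertex outside the closed neighborhood
  obtain ⟨w₀, -, hw₀⟩ := Set.exists_of_ssubset h2
  have hw₀' : w₀ ∉ closedNbhd G v := hw₀
  have hvadj : ¬ G.Adj v w₀ := fun h => hw₀' (Set.mem_insert_iff.mpr (Or.inr h))
  have hvne : w₀ ≠ v := by intro h; exact hw₀' (by rw [h]; exact Set.mem_insert _ _)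
  have hvnotuniv : ¬ IsUniversal G v := fun h => hvadj (h w₀ hvne)
  -- every non-universal vertex reaches v in Gᶜ
  have hout : ∀ z, z ∉ closedNbhd G v → Gᶜ.Adj z v := by
    intro z hz
    rw [SimpleGraph.compl_adj]
    refine ⟨fun h => hz (by rw [h]; exact Set.mem_insert v _), fun h => hz ?_⟩
    exact Set.mem_insert_iff.mpr (Or.inr h.symm)
  have hreach : ∀ u, ¬ IsUniversal G u → Gᶜ.Reachable u v := by
    intro u hu
    by_cases huv : u = v
    · subst huv; exact SimpleGraph.Reachable.refl _
    by_cases hmem : u ∈ closedNbhd G v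
    · -- u has a non-neighbor z, which must be outside N[v]
      simp only [IsUniversal, not_forall] at hu
      obtain ⟨z, hz1, hz2⟩ := hu
      have hzout : z ∉ closedNbhd G v := fun hzc => hz2 (hclique u hmem z hzc (fun h => hz1 h.symm))
      have h1 : Gᶜ.Adj u z := (SimpleGraph.compl_adj G u z).mpr ⟨fun h => hz1 h.symm, hz2⟩
      exact (h1.toWalk.append (hout z hzout).toWalk).reachable
    · exact (hout u hmem).reachable
  -- the bijection
  set g : Option {u : V // IsUniversal G u} → Gᶜ.ConnectedComponent := fun o =>
    match o with
    | none => Gᶜ.connectedComponentMk v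
    | some u => Gᶜ.connectedComponentMk u.1
  have hg : Function.Bijective g := by
    constructor
    · rintro (_ | ⟨u, hu⟩) (_ | ⟨u', hu'⟩) h
      · rfl
      · exfalso
        have := (SimpleGraph.ConnectedComponent.eq.mp h)
        exact hvnotuniv (hreach_eq u' hu' v this.symm ▸ hu')
      · exfalso
        have := (SimpleGraph.ConnectedComponent.eq.mp h)
        exact hvnotuniv (hreach_eq u hu v this ▸ hu)
      · have := (SimpleGraph.ConnectedComponent.eq.mp h)
        exact congrArg some (Subtype.ext (hreach_eq u hu u' this))
    · intro c
      obtain ⟨x, rfl⟩ := c.exists_rep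
      by_cases hx : IsUniversal G x
      · exact ⟨some ⟨x, hx⟩, rfl⟩
      · exact ⟨none, (SimpleGraph.ConnectedComponent.eq.mpr (hreach x hx)).symm⟩
  have hcard := Nat.card_eq_of_bijective g hg
  haveI : Fintype {u : V // IsUniversal G u} := Fintype.ofFinite _
  rw [← hcard, Nat.card_eq_fintype_card, Fintype.card_option, ← Nat.card_eq_fintype_card,
    ← Nat.card_coe_set_eq, Nat.add_comm]
  rfl
end

section
/- Let G be a finite simple graph with a simplicial vertex v such that {v} ⊊ N_G[v] ⊊ V(G), and suppose for each u ∈ N_G(v) we are given an acyclic matching V_u on I(G − N_G[u]). Then there exists an acyclic matching V on I(G) such that: (i) the number of critical 0-simplices equals 1 + k, where k is the number of universal vertices of G; (ii) the number of critical 1-simplices equals Σ_{u ∈ N_G(v)} f₀^{V_u}(I(G − N_G[u])) − (|N_G(v)| − k); and (iii) for t ≥ 2, the number of critical t-simplices equals Σ_{u ∈ N_G(v)} f_{t−1}^{V_u}(I(G − N_G[u])). -/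
open Finset

/-! Since `N[v]` is a clique, an independent set meets `N(v)` in at most one vertex, so
`σ ↦ σ ∩ N(v)` sorts the faces of `I(G)` into the sector `∅` of faces avoiding `N(v)` and one
sector `{u}` per neighbour `u` of `v`. The sector `∅` is a cone with apex `v`; toggling `v`
matches all of it except `{v}`. The sector `{u}` is `u * I(G − N[u])`, the join of `u` with the
complex including its empty face: lift `V_u` by adding `u`, and match `{u}` with `{u, a}` for a
critical vertex `a` of `V_u`, which exists unless `u` is universal. The sector map is monotone, so
by the patchwork (cluster) lemma the union of these acyclic matchings is acyclic, and its critical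
faces are those of the sectors. In the complement of `G` the universal vertices are isolated and
every other vertex is joined to `v`, whence `1 + k` components. -/

open Relation

namespace Relation

variable {α β : Type*} {r : α → α → Prop}

theorem TransGen.self_restrict_fiber [PartialOrder β] {f : α → β}
    (hf : ∀ a b, r a b → f b ≤ f a) {a : α} (h : TransGen r a a) :
    TransGen (fun x y => r x y ∧ f x = f a ∧ f y = f a) a a := by
  have hle : ∀ {b c}, TransGen r b c → f c ≤ f b := fun h => by
    induction h with
    | single h => exact hf _ _ h
    | tail _ h ih => exact (hf _ _ h).trans ih
  suffices ∀ b, TransGen r a b → f a ≤ f b →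
      TransGen (fun x y => r x y ∧ f x = f a ∧ f y = f a) a b from this a h le_rfl
  intro b hab
  induction hab with
  | single h => exact fun hab => .single ⟨h, rfl, le_antisymm (hf _ _ h) hab⟩
  | @tail b c hab hbc ih =>
    intro hac
    have hb : f b = f a := le_antisymm (hle hab) (hac.trans (hf _ _ hbc))
    exact (ih hb.ge).tail ⟨hbc, hb, le_antisymm ((hf _ _ hbc).trans hb.le) hac⟩

theorem TransGen.self_avoid {c : α} (hc : ∀ y, ¬ r c y) {a : α} (h : TransGen r a a) :
    TransGen (fun x y => r x y ∧ x ≠ c ∧ y ≠ c) a a := by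
  have hne : ∀ {x y}, r x y → x ≠ c := fun hxy hxc => hc _ (hxc ▸ hxy)
  have ha : a ≠ c := by
    obtain ⟨y, hy, -⟩ := TransGen.head'_iff.1 h
    exact hne hy
  suffices ∀ b, TransGen r a b → b ≠ c → TransGen (fun x y => r x y ∧ x ≠ c ∧ y ≠ c) a b from
    this a h ha
  intro b hab
  induction hab with
  | single h => exact fun hb => .single ⟨h, ha, hb⟩
  | tail _ hbc ih => exact fun hc' => (ih (hne hbc)).tail ⟨hbc, hne hbc, hc'⟩

theorem not_transGen_self_of_lt [Preorder β] (f : α → β) (hf : ∀ a b, r a b → f a < f b)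
    (a : α) : ¬ TransGen r a a := fun h =>
  lt_irrefl _ (transGen_eq_self (r := ((· < ·) : β → β → Prop)) ▸ h.lift f hf)

theorem exists_transGen_self [Finite α] [Nonempty α] (h : ∀ a, ∃ b, r a b) :
    ∃ a, TransGen r a a := by
  by_contra! hirr
  let s := flip (TransGen r)
  have : IsTrans α s := ⟨fun _ _ _ hab hbc => hbc.trans hab⟩
  have : Std.Irrefl s := ⟨hirr⟩
  obtain ⟨a, -, ha⟩ :=
    (Finite.wellFounded_of_trans_of_irrefl s).has_min Set.univ Set.univ_nonempty
  obtain ⟨b, hb⟩ := h a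
  exact ha b trivial (.single hb)

end Relation

section Matching

variable {V : Type*} {X : Set (Finset V)}

theorem isAcyclicMatching_empty (X : Set (Finset V)) : IsAcyclicMatching X ∅ := by
  refine ⟨⟨by simp, by simp, by simp, by simp, by simp⟩, ?_⟩
  refine not_transGen_self_of_lt (fun σ => OrderDual.toDual σ.card) fun σ τ h => ?_
  obtain ⟨-, -, h | ⟨-, hcard, -⟩⟩ := h
  · exact h.elim
  · exact OrderDual.toDual_lt_toDual.2 (by omega)

variable {β : Type*} {φ : Finset V → β} {N : β → Set (Finset V × Finset V)}

theorem IsMatching.iUnion_fibers (hN : ∀ c, IsMatching {σ ∈ X | φ σ = c} (N c)) :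
    IsMatching X (⋃ c, N c) := by
  have hmem : ∀ {p}, p ∈ ⋃ c, N c → ∃ c, p ∈ N c := Set.mem_iUnion.1
  refine ⟨fun p hp => ?_, fun p hp => ?_, fun p hp => ?_, fun p hp => ?_, fun p hp q hq h => ?_⟩
  · obtain ⟨c, hp⟩ := hmem hp; exact ((hN c).left_mem p hp).1
  · obtain ⟨c, hp⟩ := hmem hp; exact ((hN c).right_mem p hp).1
  · obtain ⟨c, hp⟩ := hmem hp; exact (hN c).subset p hp
  · obtain ⟨c, hp⟩ := hmem hp; exact (hN c).card_eq p hp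
  obtain ⟨c, hp⟩ := hmem hp
  obtain ⟨c', hq⟩ := hmem hq
  obtain rfl : c = c' := by
    have := (hN c).left_mem p hp; have := (hN c).right_mem p hp
    have := (hN c').left_mem q hq; have := (hN c').right_mem q hq
    grind
  exact (hN c).eq_of_shared p hp q hq h

theorem IsAcyclicMatching.iUnion_fibers [PartialOrder β]
    (hφ : ∀ σ ∈ X, ∀ τ ∈ X, τ ⊆ σ → φ τ ≤ φ σ)
    (hN : ∀ c, IsAcyclicMatching {σ ∈ X | φ σ = c} (N c)) :
    IsAcyclicMatching X (⋃ c, N c) := by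
  refine ⟨IsMatching.iUnion_fibers fun c => (hN c).1, fun σ hσ => ?_⟩
  have hfiber : ∀ {c p}, p ∈ N c → φ p.1 = c ∧ φ p.2 = c := fun hp =>
    ⟨((hN _).1.left_mem _ hp).2, ((hN _).1.right_mem _ hp).2⟩
  have hstep : ∀ a b, matchStep X (⋃ c, N c) a b → φ b ≤ φ a := by
    rintro a b ⟨ha, hb, h | ⟨hba, -, -⟩⟩
    · obtain ⟨c, hc⟩ := Set.mem_iUnion.1 h
      exact ((hfiber hc).2.trans (hfiber hc).1.symm).le
    · exact hφ a ha b hb hba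
  refine (hN (φ σ)).2 σ (TransGen.mono ?_ _ _ (hσ.self_restrict_fiber hstep))
  rintro a b ⟨⟨ha, hb, h | ⟨hba, hcard, hnot⟩⟩, hfa, hfb⟩
  · obtain ⟨c, hc⟩ := Set.mem_iUnion.1 h
    obtain rfl : c = φ σ := (hfiber hc).1.symm.trans hfa
    exact ⟨⟨ha, hfa⟩, ⟨hb, hfb⟩, Or.inl hc⟩
  · exact ⟨⟨ha, hfa⟩, ⟨hb, hfb⟩, Or.inr ⟨hba, hcard, fun h => hnot (Set.mem_iUnion.2 ⟨_, h⟩)⟩⟩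

theorem isCritical_iUnion_fibers_iff (hN : ∀ c, IsMatching {σ ∈ X | φ σ = c} (N c))
    {σ : Finset V} :
    IsCritical X (⋃ c, N c) σ ↔ IsCritical {τ ∈ X | φ τ = φ σ} (N (φ σ)) σ := by
  refine ⟨fun ⟨hσ, h⟩ => ⟨⟨hσ, rfl⟩, fun p hp => h p (Set.mem_iUnion.2 ⟨_, hp⟩)⟩,
    fun ⟨⟨hσ, _⟩, h⟩ => ⟨hσ, fun p hp => ?_⟩⟩
  obtain ⟨c, hc⟩ := Set.mem_iUnion.1 hp
  obtain rfl | hne := eq_or_ne c (φ σ)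
  · exact h p hc
  · exact ⟨fun h1 => hne (h1 ▸ ((hN c).left_mem p hc).2.symm),
      fun h2 => hne (h2 ▸ ((hN c).right_mem p hc).2.symm)⟩

theorem ncard_isCritical_iUnion_fibers [Finite V]
    (hN : ∀ c, IsMatching {σ ∈ X | φ σ = c} (N c)) (t : Finset β) (ht : ∀ σ ∈ X, φ σ ∈ t)
    (P : Finset V → Prop) :
    {σ | IsCritical X (⋃ c, N c) σ ∧ P σ}.ncard =
      ∑ c ∈ t, {σ | IsCritical {τ ∈ X | φ τ = c} (N c) σ ∧ P σ}.ncard := by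
  have hunion : {σ | IsCritical X (⋃ c, N c) σ ∧ P σ} =
      ⋃ c ∈ (t : Set β), {σ | IsCritical {τ ∈ X | φ τ = c} (N c) σ ∧ P σ} := by
    ext σ
    simp only [Set.mem_ofPred_eq, Set.mem_iUnion, isCritical_iUnion_fibers_iff hN]
    refine ⟨fun h => ⟨φ σ, ht σ h.1.1.1, h⟩, ?_⟩
    rintro ⟨c, -, h⟩
    obtain rfl := h.1.1.2
    exact h
  rw [hunion, (t.finite_toSet).ncard_biUnion (fun _ _ => Set.toFinite _), finsum_mem_coe_finset]
  rintro c - c' - hne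
  exact Set.disjoint_left.2 fun σ hσ hσ' => hne (hσ.1.1.2.symm.trans hσ'.1.1.2)

end Matching

section Constructions

variable {V : Type*} [DecidableEq V] {X Y : Set (Finset V)} {M : Set (Finset V × Finset V)}

theorem insert_inj_of_notMem {u : V} {s t : Finset V} (hs : u ∉ s) (ht : u ∉ t) :
    insert u s = insert u t ↔ s = t :=
  ⟨fun h => insert_erase_invOn.2.injOn hs ht h, congrArg _⟩

def coneMatching (Y : Set (Finset V)) (v : V) : Set (Finset V × Finset V) :=
  (fun σ => (σ, insert v σ)) '' {σ ∈ Y | v ∉ σ}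

theorem isAcyclicMatching_coneMatching {v : V} (hY : ∀ σ ∈ Y, insert v σ ∈ Y) :
    IsAcyclicMatching Y (coneMatching Y v) := by
  refine ⟨⟨?_, ?_, ?_, ?_, ?_⟩, ?_⟩
  · rintro _ ⟨σ, ⟨hσ, -⟩, rfl⟩; exact hσ
  · rintro _ ⟨σ, ⟨hσ, -⟩, rfl⟩; exact hY σ hσ
  · rintro _ ⟨σ, -, rfl⟩; exact subset_insert v σ
  · rintro _ ⟨σ, ⟨-, hv⟩, rfl⟩; exact card_insert_of_notMem hv
  · rintro _ ⟨σ, ⟨-, hσ⟩, rfl⟩ _ ⟨τ, ⟨-, hτ⟩, rfl⟩ h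
    dsimp only at h
    obtain rfl : σ = τ := by
      rcases h with h | h | h | h
      · exact h
      · exact absurd (h ▸ mem_insert_self v τ) hσ
      · exact absurd (h ▸ mem_insert_self v σ) hτ
      · exact (insert_inj_of_notMem hσ hτ).1 h
    rfl
  -- `|σ| - 2 |σ \ {v}|` goes up by one along every step
  refine not_transGen_self_of_lt (fun σ => (σ.card : ℤ) - 2 * (σ.erase v).card) ?_
  rintro a b ⟨-, hb, ⟨a, ⟨-, hv⟩, he⟩ | ⟨hba, hcard, hnot⟩⟩
  · obtain ⟨rfl, rfl⟩ := Prod.mk.inj he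
    rw [card_insert_of_notMem hv, erase_insert hv, erase_eq_of_notMem hv]
    push_cast
    omega
  · obtain ⟨x, hx, rfl⟩ := exists_eq_insert_iff.2 ⟨hba, hcard.symm⟩
    obtain rfl | hxv := eq_or_ne x v
    · exact absurd ⟨b, ⟨hb, hx⟩, rfl⟩ hnot
    rw [erase_insert_of_ne hxv, card_insert_of_notMem hx,
      card_insert_of_notMem fun h => hx (mem_of_mem_erase h)]
    push_cast
    omega

theorem isCritical_coneMatching_iff {v : V} (hY : IsComplex Y) (hv : {v} ∈ Y) {σ : Finset V} :
    IsCritical Y (coneMatching Y v) σ ↔ σ = {v} := by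
  constructor
  · rintro ⟨hσ, h⟩
    by_cases hvσ : v ∈ σ
    · by_contra hne
      have herase : (σ.erase v).Nonempty := by
        rw [nonempty_iff_ne_empty, Ne, erase_eq_empty_iff]
        exact not_or.2 ⟨(hY.1 σ hσ).ne_empty, hne⟩
      refine (h (σ.erase v, σ) ⟨σ.erase v, ⟨hY.2 hσ (erase_subset v σ) herase,
        notMem_erase v σ⟩, by simp only [insert_erase hvσ]⟩).2 rfl
    · exact ((h (σ, insert v σ) ⟨σ, ⟨hσ, hvσ⟩, rfl⟩).1 rfl).elim
  · rintro rfl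
    refine ⟨hv, ?_⟩
    rintro _ ⟨τ, ⟨hτ, hvτ⟩, rfl⟩
    dsimp only
    refine ⟨fun h => hvτ (h ▸ mem_singleton_self v), fun h => ?_⟩
    obtain ⟨x, hx⟩ := hY.1 τ hτ
    have : x ∈ ({v} : Finset V) := h ▸ mem_insert_of_mem hx
    exact hvτ (mem_singleton.1 this ▸ hx)

theorem ncard_isCritical_coneMatching [Finite V] {v : V} (hY : IsComplex Y) (hv : {v} ∈ Y)
    (d : ℕ) :
    {σ | IsCritical Y (coneMatching Y v) σ ∧ σ.card = d + 1}.ncard = if d = 0 then 1 else 0 := by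
  simp only [isCritical_coneMatching_iff hY hv]
  split_ifs with hd
  · subst hd
    rw [show {σ : Finset V | σ = {v} ∧ σ.card = 0 + 1} = {{v}} by ext; simp +contextual]
    exact Set.ncard_singleton _
  · refine (Set.ncard_eq_zero (Set.toFinite _)).2 (Set.eq_empty_of_forall_notMem ?_)
    rintro _ ⟨rfl, h⟩
    simp at h
    omega

def liftMatching (u : V) (M : Set (Finset V × Finset V)) : Set (Finset V × Finset V) :=
  Prod.map (insert u) (insert u) '' M

theorem erase_mem_of_mem_image_insert {u : V} (hu : ∀ τ ∈ Y, u ∉ τ) {σ : Finset V}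
    (hσ : σ ∈ insert u '' Y) : u ∈ σ ∧ σ.erase u ∈ Y := by
  obtain ⟨τ, hτ, rfl⟩ := hσ
  exact ⟨mem_insert_self u τ, (erase_insert (hu τ hτ)).symm ▸ hτ⟩

theorem IsMatching.liftMatching {u : V} (hM : IsMatching Y M) (hu : ∀ τ ∈ Y, u ∉ τ) :
    IsMatching (insert u '' Y) (liftMatching u M) := by
  have hl : ∀ q ∈ M, u ∉ q.1 := fun q hq => hu _ (hM.left_mem q hq)
  have hr : ∀ q ∈ M, u ∉ q.2 := fun q hq => hu _ (hM.right_mem q hq)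
  refine ⟨?_, ?_, ?_, ?_, ?_⟩
  · rintro _ ⟨q, hq, rfl⟩; exact Set.mem_image_of_mem _ (hM.left_mem q hq)
  · rintro _ ⟨q, hq, rfl⟩; exact Set.mem_image_of_mem _ (hM.right_mem q hq)
  · rintro _ ⟨q, hq, rfl⟩; exact insert_subset_insert u (hM.subset q hq)
  · rintro _ ⟨q, hq, rfl⟩
    simp only [Prod.map, card_insert_of_notMem (hl q hq), card_insert_of_notMem (hr q hq),
      hM.card_eq q hq]
  · rintro _ ⟨q, hq, rfl⟩ _ ⟨q', hq', rfl⟩ h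
    simp only [Prod.map, insert_inj_of_notMem (hl q hq) (hl q' hq'),
      insert_inj_of_notMem (hl q hq) (hr q' hq'), insert_inj_of_notMem (hr q hq) (hl q' hq'),
      insert_inj_of_notMem (hr q hq) (hr q' hq')] at h
    rw [hM.eq_of_shared q hq q' hq' h]

theorem IsAcyclicMatching.liftMatching {u : V} (hM : IsAcyclicMatching Y M)
    (hu : ∀ τ ∈ Y, u ∉ τ) : IsAcyclicMatching (insert u '' Y) (liftMatching u M) := by
  refine ⟨hM.1.liftMatching hu, fun σ hσ => hM.2 _ (hσ.lift (fun ρ => ρ.erase u) fun a b hab => ?_)⟩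
  obtain ⟨ha, hb, h | ⟨hba, hcard, hnot⟩⟩ := hab
  · obtain ⟨q, hq, hqab⟩ := h
    simp only [Prod.map, Prod.mk.injEq] at hqab
    dsimp only [Function.onFun]
    rw [← hqab.1, ← hqab.2, erase_insert (hu _ (hM.1.left_mem q hq)),
      erase_insert (hu _ (hM.1.right_mem q hq))]
    exact ⟨hM.1.left_mem q hq, hM.1.right_mem q hq, Or.inl hq⟩
  · obtain ⟨hua, ha'⟩ := erase_mem_of_mem_image_insert hu ha
    obtain ⟨hub, hb'⟩ := erase_mem_of_mem_image_insert hu hb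
    refine ⟨ha', hb', Or.inr ⟨erase_subset_erase u hba, ?_, fun h => hnot ⟨_, h, ?_⟩⟩⟩
    · rw [card_erase_of_mem hua, card_erase_of_mem hub, hcard]
      have := card_pos.2 ⟨u, hub⟩
      omega
    · simp only [Prod.map, insert_erase hua, insert_erase hub]

theorem isCritical_liftMatching_iff {u : V} (hM : IsMatching Y M) (hu : ∀ τ ∈ Y, u ∉ τ)
    {τ : Finset V} (hτ : u ∉ τ) :
    IsCritical (insert u '' Y) (liftMatching u M) (insert u τ) ↔ IsCritical Y M τ := by
  have inj : ∀ {s}, u ∉ s → (insert u s = insert u τ ↔ s = τ) :=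
    fun hs => insert_inj_of_notMem hs hτ
  constructor
  · rintro ⟨⟨τ', hτ', he⟩, h⟩
    refine ⟨(inj (hu τ' hτ')).1 he ▸ hτ', fun q hq => ?_⟩
    have := h _ ⟨q, hq, rfl⟩
    simp only [Prod.map, Ne] at this
    exact ⟨fun h1 => this.1 (h1 ▸ rfl), fun h2 => this.2 (h2 ▸ rfl)⟩
  · rintro ⟨hτY, h⟩
    refine ⟨Set.mem_image_of_mem _ hτY, ?_⟩
    rintro _ ⟨q, hq, rfl⟩
    simp only [Prod.map, Ne, inj (hu _ (hM.left_mem q hq)), inj (hu _ (hM.right_mem q hq))]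
    exact h q hq

theorem ncard_isCritical_liftMatching [Finite V] {u : V} (hM : IsMatching Y M)
    (hu : ∀ τ ∈ Y, u ∉ τ) (d : ℕ) :
    {σ | IsCritical (insert u '' Y) (liftMatching u M) σ ∧ σ.card = d + 1}.ncard =
      {τ | IsCritical Y M τ ∧ τ.card = d}.ncard := by
  have hset : {σ | IsCritical (insert u '' Y) (liftMatching u M) σ ∧ σ.card = d + 1} =
      insert u '' {τ | IsCritical Y M τ ∧ τ.card = d} := by
    ext σ
    constructor
    · rintro ⟨hσ, hcard⟩
      obtain ⟨τ, hτ, rfl⟩ := hσ.1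
      rw [card_insert_of_notMem (hu τ hτ), Nat.add_right_cancel_iff] at hcard
      exact ⟨τ, ⟨(isCritical_liftMatching_iff hM hu (hu τ hτ)).1 hσ, hcard⟩, rfl⟩
    · rintro ⟨τ, ⟨hτ, hcard⟩, rfl⟩
      exact ⟨(isCritical_liftMatching_iff hM hu (hu τ hτ.1)).2 hτ,
        by rw [card_insert_of_notMem (hu τ hτ.1), hcard]⟩
  rw [hset]
  exact ((insert_erase_invOn (a := u)).2.injOn.mono fun τ hτ => hu τ hτ.1.1).ncard_image

end Constructions

section Augment

variable {V : Type*} {X : Set (Finset V)} {M : Set (Finset V × Finset V)}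

theorem exists_transGen_singleton_of_not_isCritical (hX : IsComplex X) (hM : IsMatching X M)
    {a : V} (ha : {a} ∈ X) (hcrit : ¬ IsCritical X M {a}) :
    ∃ b, {b} ∈ X ∧ TransGen (matchStep X M) {a} {b} := by
  classical
  obtain ⟨p, hp, hpa⟩ : ∃ p ∈ M, p.1 = {a} ∨ p.2 = {a} := by
    simpa [IsCritical, ha, imp_iff_not_or, or_comm] using hcrit
  have hp1 : p.1 = {a} := hpa.resolve_right fun h => by
    have := hM.card_eq p hp
    rw [h, card_singleton] at this
    exact (hX.1 _ (hM.left_mem p hp)).ne_empty (card_eq_zero.1 (by omega))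
  obtain ⟨b, hb, hpb⟩ := exists_eq_insert_iff.2
    ⟨hp1 ▸ hM.subset p hp, by rw [← hp1, hM.card_eq p hp]⟩
  have hp2 : p.2 ∈ X := hM.right_mem p hp
  have hbp : {b} ⊆ p.2 := hpb ▸ by simp
  have hbX : {b} ∈ X := hX.2 hp2 hbp (singleton_nonempty b)
  have hdown : ({b}, p.2) ∉ M := fun hbM => by
    have := congrArg Prod.fst (hM.eq_of_shared _ hbM p hp (by simp))
    simp only [hp1, singleton_inj] at this
    exact hb (mem_singleton.2 this)
  refine ⟨b, hbX, .tail (.single ⟨ha, hp2, Or.inl (hp1 ▸ hp)⟩)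
    ⟨hp2, hbX, Or.inr ⟨hbp, ?_, hdown⟩⟩⟩
  rw [← hpb, card_insert_of_notMem hb, card_singleton, card_singleton]

theorem exists_isCritical_singleton [Finite V] (hX : IsComplex X) (hM : IsAcyclicMatching X M)
    (hne : X.Nonempty) : ∃ a, IsCritical X M {a} := by
  by_contra! hcrit
  obtain ⟨σ, hσ⟩ := hne
  obtain ⟨x, hx⟩ := hX.1 σ hσ
  have : Nonempty {a : V // {a} ∈ X} :=
    ⟨⟨x, hX.2 hσ (singleton_subset_iff.2 hx) (singleton_nonempty x)⟩⟩
  obtain ⟨a, ha⟩ := exists_transGen_self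
    (r := fun a b : {a : V // {a} ∈ X} => TransGen (matchStep X M) {a.1} {b.1})
    fun ⟨a, ha⟩ => by
      obtain ⟨b, hb, hab⟩ := exists_transGen_singleton_of_not_isCritical hX hM.1 ha (hcrit a)
      exact ⟨⟨b, hb⟩, hab⟩
  exact hM.2 _ (TransGen.lift' (fun a : {a : V // {a} ∈ X} => ({a.1} : Finset V))
    (fun _ _ h => h) a a ha)

open Classical in
noncomputable def augmentMatching (X : Set (Finset V)) (M : Set (Finset V × Finset V)) :
    Set (Finset V × Finset V) :=
  if h : ∃ a, IsCritical X M {a} then insert (∅, {h.choose}) M else M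

theorem isCritical_insert_empty_iff {a : V} {τ : Finset V} (hτ : τ ≠ ∅) :
    IsCritical (insert ∅ X) (insert (∅, {a}) M) τ ↔ IsCritical X M τ ∧ τ ≠ {a} := by
  constructor
  · rintro ⟨hτX, h⟩
    exact ⟨⟨hτX.resolve_left hτ, fun q hq => h q (Set.mem_insert_of_mem _ hq)⟩,
      fun he => (h _ (Set.mem_insert _ _)).2 he.symm⟩
  · rintro ⟨⟨hτX, h⟩, hne⟩
    refine ⟨Set.mem_insert_of_mem _ hτX, ?_⟩
    rintro p (rfl | hp)
    exacts [⟨Ne.symm hτ, Ne.symm hne⟩, h p hp]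

theorem IsMatching.insert_empty {a : V} (hX : ∀ σ ∈ X, σ.Nonempty) (hM : IsMatching X M)
    (ha : IsCritical X M {a}) : IsMatching (insert ∅ X) (insert (∅, {a}) M) := by
  have hq : ∀ q ∈ M, q.1 ≠ ∅ ∧ q.2 ≠ ∅ ∧ q.1 ≠ {a} ∧ q.2 ≠ {a} := fun q hq =>
    ⟨(hX _ (hM.left_mem q hq)).ne_empty, (hX _ (hM.right_mem q hq)).ne_empty, ha.2 q hq⟩
  refine ⟨?_, ?_, ?_, ?_, ?_⟩
  · rintro p (rfl | hp)
    exacts [Set.mem_insert _ _, Set.mem_insert_of_mem _ (hM.left_mem p hp)]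
  · rintro p (rfl | hp)
    exacts [Set.mem_insert_of_mem _ ha.1, Set.mem_insert_of_mem _ (hM.right_mem p hp)]
  · rintro p (rfl | hp)
    exacts [empty_subset _, hM.subset p hp]
  · rintro p (rfl | hp)
    exacts [card_singleton a, hM.card_eq p hp]
  · rintro p (rfl | hp) q (rfl | hq') h
    · rfl
    · have := hq q hq'; simp only at h; grind
    · have := hq p hp; simp only at h; grind
    · exact hM.eq_of_shared p hp q hq' h

theorem IsAcyclicMatching.insert_empty {a : V} (hX : ∀ σ ∈ X, σ.Nonempty)
    (hM : IsAcyclicMatching X M) (ha : IsCritical X M {a}) :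
    IsAcyclicMatching (insert ∅ X) (insert (∅, {a}) M) := by
  refine ⟨hM.1.insert_empty hX ha, fun σ hσ => ?_⟩
  -- `{a}` is a sink, and once it is removed so is `∅`; what is left is a cycle of `M`
  have hsink : ∀ y, ¬ matchStep (insert ∅ X) (insert (∅, {a}) M) {a} y := by
    rintro y ⟨-, -, h | ⟨hya, hcard, hnot⟩⟩
    · rcases h with h | h
      · exact singleton_ne_empty a (congrArg Prod.fst h)
      · exact (ha.2 _ h).1 rfl
    · rw [card_singleton] at hcard
      obtain rfl : y = ∅ := card_eq_zero.1 (by omega)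
      exact hnot (Set.mem_insert _ _)
  have hsink' : ∀ y, ¬ (matchStep (insert ∅ X) (insert (∅, {a}) M) ∅ y ∧
      (∅ : Finset V) ≠ {a} ∧ y ≠ {a}) := by
    rintro y ⟨⟨-, -, h | ⟨-, hcard, -⟩⟩, -, hy⟩
    · rcases h with h | h
      · exact hy (congrArg Prod.snd h)
      · exact (hX _ (hM.1.left_mem _ h)).ne_empty rfl
    · simp at hcard
  refine hM.2 σ (TransGen.mono ?_ _ _ ((hσ.self_avoid hsink).self_avoid hsink'))
  rintro x y ⟨⟨⟨hx, hy, h | ⟨hyx, hcard, hnot⟩⟩, -, -⟩, hx0, hy0⟩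
  · exact ⟨hx.resolve_left hx0, hy.resolve_left hy0,
      Or.inl (h.resolve_left fun he => hx0 (congrArg Prod.fst he))⟩
  · exact ⟨hx.resolve_left hx0, hy.resolve_left hy0,
      Or.inr ⟨hyx, hcard, fun h => hnot (Set.mem_insert_of_mem _ h)⟩⟩

theorem eq_empty_of_not_exists_isCritical_singleton [Finite V] (hX : IsComplex X)
    (hM : IsAcyclicMatching X M) (h : ¬ ∃ a, IsCritical X M {a}) : X = ∅ ∧ M = ∅ := by
  obtain rfl : X = ∅ := Set.not_nonempty_iff_eq_empty.1 fun hne =>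
    h (exists_isCritical_singleton hX hM hne)
  exact ⟨rfl, Set.eq_empty_of_forall_notMem fun p hp => hM.1.left_mem p hp⟩

theorem IsAcyclicMatching.augmentMatching [Finite V] (hX : IsComplex X)
    (hM : IsAcyclicMatching X M) : IsAcyclicMatching (insert ∅ X) (augmentMatching X M) := by
  unfold _root_.augmentMatching
  split_ifs with h
  · exact hM.insert_empty hX.1 h.choose_spec
  · obtain ⟨rfl, rfl⟩ := eq_empty_of_not_exists_isCritical_singleton hX hM h
    exact isAcyclicMatching_empty _

theorem isCritical_augmentMatching_empty_iff [Finite V] (hX : IsComplex X)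
    (hM : IsAcyclicMatching X M) :
    IsCritical (insert ∅ X) (augmentMatching X M) ∅ ↔ X = ∅ := by
  unfold augmentMatching
  split_ifs with h
  · exact iff_of_false (fun hcrit => (hcrit.2 _ (Set.mem_insert _ _)).1 rfl)
      (Set.nonempty_iff_ne_empty.1 ⟨_, h.choose_spec.1⟩)
  · obtain ⟨rfl, rfl⟩ := eq_empty_of_not_exists_isCritical_singleton hX hM h
    exact iff_of_true ⟨Set.mem_insert _ _, by simp⟩ rfl

theorem isCritical_augmentMatching_iff [Finite V] (hX : IsComplex X)
    (hM : IsAcyclicMatching X M) {σ : Finset V} (hσ : σ ≠ ∅) :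
    IsCritical (insert ∅ X) (augmentMatching X M) σ ↔
      IsCritical X M σ ∧ ∀ h : ∃ a, IsCritical X M {a}, σ ≠ {h.choose} := by
  unfold augmentMatching
  split_ifs with h
  · rw [isCritical_insert_empty_iff hσ]
    exact and_congr_right fun _ => ⟨fun hne _ => hne, fun hne => hne h⟩
  · obtain ⟨rfl, rfl⟩ := eq_empty_of_not_exists_isCritical_singleton hX hM h
    simp [IsCritical, hσ]

theorem critCount_augmentMatching_zero [Finite V] (hX : IsComplex X)
    (hM : IsAcyclicMatching X M) :
    critCount (insert ∅ X) (augmentMatching X M) 0 + (if X = ∅ then 0 else 1) =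
      critCount X M 0 := by
  have hiff : ∀ σ : Finset V, σ.card = 0 + 1 →
      (IsCritical (insert ∅ X) (augmentMatching X M) σ ↔
        IsCritical X M σ ∧ ∀ h : ∃ a, IsCritical X M {a}, σ ≠ {h.choose}) := fun σ hσ =>
    isCritical_augmentMatching_iff hX hM (card_pos.1 (by omega)).ne_empty
  unfold critCount
  by_cases h : ∃ a, IsCritical X M {a}
  · have hX0 : X ≠ ∅ := Set.nonempty_iff_ne_empty.1 ⟨_, h.choose_spec.1⟩
    have hset : {σ | IsCritical (insert ∅ X) (augmentMatching X M) σ ∧ σ.card = 0 + 1} =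
        {σ | IsCritical X M σ ∧ σ.card = 0 + 1} \ {{h.choose}} := by
      ext σ
      simp only [Set.mem_ofPred_eq, Set.mem_sdiff, Set.mem_singleton_iff]
      exact ⟨fun ⟨hc, h1⟩ => ⟨⟨((hiff σ h1).1 hc).1, h1⟩, ((hiff σ h1).1 hc).2 h⟩,
        fun ⟨⟨hc, h1⟩, hne⟩ => ⟨(hiff σ h1).2 ⟨hc, fun _ => hne⟩, h1⟩⟩
    rw [if_neg hX0, hset]
    exact Set.ncard_sdiff_singleton_add_one
      (show {h.choose} ∈ {σ | IsCritical X M σ ∧ σ.card = 0 + 1} from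
        ⟨h.choose_spec, card_singleton _⟩) (Set.toFinite _)
  · obtain ⟨rfl, -⟩ := eq_empty_of_not_exists_isCritical_singleton hX hM h
    simp only [if_true, add_zero]
    congr 1
    ext σ
    exact and_congr_left fun h1 => (hiff σ h1).trans (and_iff_left fun h' => (h h').elim)

theorem critCount_augmentMatching_succ [Finite V] (hX : IsComplex X)
    (hM : IsAcyclicMatching X M) (d : ℕ) :
    critCount (insert ∅ X) (augmentMatching X M) (d + 1) = critCount X M (d + 1) := by
  unfold critCount
  congr 1
  ext σ
  refine and_congr_left fun hσ => ?_
  rw [isCritical_augmentMatching_iff hX hM (card_pos.1 (by omega)).ne_empty]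
  exact and_iff_left fun _ he => by simp [he] at hσ

theorem ncard_isCritical_augmentMatching_card_zero [Finite V] (hX : IsComplex X)
    (hM : IsAcyclicMatching X M) :
    {τ | IsCritical (insert ∅ X) (augmentMatching X M) τ ∧ τ.card = 0}.ncard =
      if X = ∅ then 1 else 0 := by
  have hset : {τ | IsCritical (insert ∅ X) (augmentMatching X M) τ ∧ τ.card = 0} =
      {τ | τ = ∅ ∧ X = ∅} := by
    ext τ
    simp only [Set.mem_ofPred_eq, card_eq_zero]
    exact ⟨fun ⟨hc, h0⟩ => ⟨h0, (isCritical_augmentMatching_empty_iff hX hM).1 (h0 ▸ hc)⟩,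
      fun ⟨h0, hX0⟩ => ⟨h0 ▸ (isCritical_augmentMatching_empty_iff hX hM).2 hX0, h0⟩⟩
  rw [hset]
  split_ifs with hX0 <;> simp [hX0]

end Augment

section IndependenceComplex

variable {V : Type*} {G : SimpleGraph V}

theorem isComplex_avoidIndep (G : SimpleGraph V) (U : Set V) : IsComplex (avoidIndep G U) :=
  ⟨fun _ hs => hs.1, fun _ _ hs hts ht =>
    ⟨ht, fun x hx => hs.2.1 x (hts hx), fun x hx y hy => hs.2.2 x (hts hx) y (hts hy)⟩⟩

theorem insert_empty_avoidIndep (G : SimpleGraph V) (U : Set V) :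
    insert ∅ (avoidIndep G U) = avoidIndepE G U := by
  ext s
  rcases s.eq_empty_or_nonempty with rfl | hs
  · simp [avoidIndepE]
  · simp [avoidIndep, avoidIndepE, hs, hs.ne_empty]

theorem avoidIndep_closedNbhd_eq_empty_iff {u : V} :
    avoidIndep G (closedNbhd G u) = ∅ ↔ IsUniversal G u := by
  simp only [Set.eq_empty_iff_forall_notMem, avoidIndep, closedNbhd, Set.mem_insert_iff,
    SimpleGraph.mem_neighborSet, not_or, Set.mem_ofPred_eq]
  constructor
  · intro h w hw
    by_contra hadj
    exact h {w} ⟨singleton_nonempty w, by simpa using ⟨hw, hadj⟩, by simp⟩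
  · rintro hu s ⟨⟨x, hx⟩, hs, -⟩
    exact (hs x hx).2 (hu x (hs x hx).1)

theorem notMem_of_mem_avoidIndepE_closedNbhd {u : V} {τ : Finset V}
    (hτ : τ ∈ avoidIndepE G (closedNbhd G u)) : u ∉ τ :=
  fun hu => hτ.1 u hu (Set.mem_insert u _)

variable [Fintype V] [DecidableEq V] [DecidableRel G.Adj] {v : V}

theorem inter_neighborFinset_eq_empty_iff {σ : Finset V} :
    σ ∩ G.neighborFinset v = ∅ ↔ ∀ x ∈ σ, x ∉ G.neighborSet v := by
  simp [eq_empty_iff_forall_notMem]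

theorem indepComplex_sep_inter_neighborFinset_eq_empty :
    {σ ∈ indepComplex G | σ ∩ G.neighborFinset v = ∅} = avoidIndep G (G.neighborSet v) := by
  ext σ
  simp only [Set.mem_sep_iff, inter_neighborFinset_eq_empty_iff]
  exact ⟨fun ⟨⟨hne, _, hind⟩, h⟩ => ⟨hne, h, hind⟩, fun ⟨hne, h, hind⟩ => ⟨⟨hne, by simp, hind⟩, h⟩⟩

omit [Fintype V] [DecidableRel G.Adj] in
theorem insert_mem_avoidIndep_neighborSet {σ : Finset V} (hσ : σ ∈ avoidIndep G (G.neighborSet v)) :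
    insert v σ ∈ avoidIndep G (G.neighborSet v) := by
  obtain ⟨-, hN, hind⟩ := hσ
  refine ⟨insert_nonempty v σ, ?_, ?_⟩
  · simp only [mem_insert, forall_eq_or_imp]
    exact ⟨G.notMem_neighborSet_self, hN⟩
  · simp only [mem_insert, forall_eq_or_imp, G.irrefl, not_false_eq_true, true_and]
    exact ⟨fun y hy hvy => hN y hy hvy,
      fun x hx => ⟨fun hxv => hN x hx hxv.symm, hind x hx⟩⟩

variable (hclique : ∀ x ∈ closedNbhd G v, ∀ y ∈ closedNbhd G v, x ≠ y → G.Adj x y)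
include hclique

theorem inter_neighborFinset_eq_empty_or_singleton {σ : Finset V} (hσ : σ ∈ indepComplex G) :
    σ ∩ G.neighborFinset v = ∅ ∨ ∃ u ∈ G.neighborSet v, σ ∩ G.neighborFinset v = {u} := by
  refine (σ ∩ G.neighborFinset v).eq_empty_or_nonempty.imp_right fun ⟨u, hu⟩ => ⟨u, ?_, ?_⟩
  · simpa using (mem_inter.1 hu).2
  · refine eq_singleton_iff_unique_mem.2 ⟨hu, fun x hx => ?_⟩
    simp only [mem_inter, SimpleGraph.mem_neighborFinset] at hu hx
    by_contra hxu
    exact hσ.2.2 x hx.1 u hu.1 (hclique x (Or.inr hx.2) u (Or.inr hu.2) hxu)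

theorem indepComplex_sep_inter_neighborFinset_eq_singleton {u : V} (hu : u ∈ G.neighborSet v) :
    {σ ∈ indepComplex G | σ ∩ G.neighborFinset v = {u}} =
      insert u '' avoidIndepE G (closedNbhd G u) := by
  ext σ
  constructor
  · rintro ⟨⟨-, -, hind⟩, hσ⟩
    have huσ : u ∈ σ := (mem_inter.1 (hσ ▸ mem_singleton_self u)).1
    refine ⟨σ.erase u, ⟨fun x hx => ?_, fun x hx y hy =>
      hind x (mem_of_mem_erase hx) y (mem_of_mem_erase hy)⟩, insert_erase huσ⟩
    simp only [closedNbhd, Set.mem_insert_iff, SimpleGraph.mem_neighborSet, not_or]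
    exact ⟨ne_of_mem_erase hx, hind u huσ x (mem_of_mem_erase hx)⟩
  · rintro ⟨τ, ⟨hτ, hind⟩, rfl⟩
    have hτu : ∀ x ∈ τ, x ≠ u ∧ ¬ G.Adj u x := by simpa [closedNbhd, not_or] using hτ
    refine ⟨⟨insert_nonempty u τ, by simp, ?_⟩, ?_⟩
    · simp only [mem_insert, forall_eq_or_imp, G.irrefl, not_false_eq_true, true_and]
      exact ⟨fun y hy => (hτu y hy).2, fun x hx => ⟨fun h => (hτu x hx).2 h.symm, hind x hx⟩⟩
    refine eq_singleton_iff_unique_mem.2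
      ⟨mem_inter.2 ⟨mem_insert_self u τ, by simpa using hu⟩, fun x hx => ?_⟩
    obtain ⟨hx, hxv⟩ := mem_inter.1 hx
    rcases mem_insert.1 hx with rfl | hx
    · rfl
    · exact absurd (hclique u (Or.inr hu) x (Or.inr (by simpa using hxv)) (hτu x hx).1.symm)
        (hτu x hx).2

end IndependenceComplex

section Links

variable {V : Type*} [Fintype V] {G : SimpleGraph V} {v : V} {M : V → Set (Finset V × Finset V)}
  (hM : ∀ u ∈ G.neighborSet v, IsAcyclicMatching (avoidIndep G (closedNbhd G u)) (M u))
include hM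

theorem isAcyclicMatching_augmentMatching_avoidIndepE {u : V} (hu : u ∈ G.neighborSet v) :
    IsAcyclicMatching (avoidIndepE G (closedNbhd G u))
      (augmentMatching (avoidIndep G (closedNbhd G u)) (M u)) :=
  insert_empty_avoidIndep G _ ▸ (hM u hu).augmentMatching (isComplex_avoidIndep G _)

theorem sum_critCount_augmentMatching_zero [DecidableRel G.Adj]
    [DecidablePred (IsUniversal G)] :
    ∑ u ∈ G.neighborFinset v, critCount (insert ∅ (avoidIndep G (closedNbhd G u)))
        (augmentMatching (avoidIndep G (closedNbhd G u)) (M u)) 0 +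
      #{u ∈ G.neighborFinset v | ¬ IsUniversal G u} =
    ∑ u ∈ G.neighborFinset v, critCount (avoidIndep G (closedNbhd G u)) (M u) 0 := by
  rw [card_filter, ← sum_add_distrib]
  refine sum_congr rfl fun u hu => ?_
  rw [← critCount_augmentMatching_zero (isComplex_avoidIndep G _) (hM u (by simpa using hu))]
  by_cases h : IsUniversal G u <;> simp [h, avoidIndep_closedNbhd_eq_empty_iff]

end Links

section Sectors

variable {V : Type*} [DecidableEq V] {G : SimpleGraph V} {v : V}
  {M : V → Set (Finset V × Finset V)}

noncomputable def sectorMatching (G : SimpleGraph V) (v : V) (M : V → Set (Finset V × Finset V))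
    (c : Finset V) : Set (Finset V × Finset V) :=
  if c = ∅ then coneMatching (avoidIndep G (G.neighborSet v)) v
  else ⋃ u ∈ G.neighborSet v, ⋃ (_ : c = {u}),
    liftMatching u (augmentMatching (avoidIndep G (closedNbhd G u)) (M u))

theorem sectorMatching_empty :
    sectorMatching G v M ∅ = coneMatching (avoidIndep G (G.neighborSet v)) v :=
  if_pos rfl

theorem sectorMatching_singleton {u : V} (hu : u ∈ G.neighborSet v) :
    sectorMatching G v M {u} =
      liftMatching u (augmentMatching (avoidIndep G (closedNbhd G u)) (M u)) := by
  rw [sectorMatching, if_neg (singleton_ne_empty u)]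
  ext p
  simp [(G.mem_neighborSet v u).1 hu]

theorem sectorMatching_eq_empty {c : Finset V} (h0 : c ≠ ∅)
    (h1 : ∀ u ∈ G.neighborSet v, c ≠ {u}) : sectorMatching G v M c = ∅ := by
  rw [sectorMatching, if_neg h0]
  ext p
  simp only [Set.mem_iUnion, Set.mem_empty_iff_false, iff_false, not_exists]
  exact fun u hu hc => absurd hc (h1 u hu)

variable [Fintype V] [DecidableRel G.Adj]
  (hM : ∀ u ∈ G.neighborSet v, IsAcyclicMatching (avoidIndep G (closedNbhd G u)) (M u))
  (hclique : ∀ x ∈ closedNbhd G v, ∀ y ∈ closedNbhd G v, x ≠ y → G.Adj x y)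
include hM hclique

theorem isAcyclicMatching_sectorMatching (c : Finset V) :
    IsAcyclicMatching {σ ∈ indepComplex G | σ ∩ G.neighborFinset v = c}
      (sectorMatching G v M c) := by
  rcases eq_or_ne c ∅ with rfl | h0
  · rw [indepComplex_sep_inter_neighborFinset_eq_empty, sectorMatching_empty]
    exact isAcyclicMatching_coneMatching fun σ => insert_mem_avoidIndep_neighborSet
  by_cases h1 : ∃ u ∈ G.neighborSet v, c = {u}
  · obtain ⟨u, hu, rfl⟩ := h1
    rw [indepComplex_sep_inter_neighborFinset_eq_singleton hclique hu, sectorMatching_singleton hu]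
    exact (isAcyclicMatching_augmentMatching_avoidIndepE hM hu).liftMatching
      fun _ => notMem_of_mem_avoidIndepE_closedNbhd
  · push Not at h1
    rw [sectorMatching_eq_empty h0 h1]
    exact isAcyclicMatching_empty _

theorem isAcyclicMatching_iUnion_sectorMatching :
    IsAcyclicMatching (indepComplex G) (⋃ c, sectorMatching G v M c) :=
  IsAcyclicMatching.iUnion_fibers (φ := fun σ => σ ∩ G.neighborFinset v)
    (fun _ _ _ _ h => inter_subset_inter h subset_rfl) (isAcyclicMatching_sectorMatching hM hclique)

theorem critCount_iUnion_sectorMatching (d : ℕ) :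
    critCount (indepComplex G) (⋃ c, sectorMatching G v M c) d =
      (if d = 0 then 1 else 0) + ∑ u ∈ G.neighborFinset v,
        {τ | IsCritical (avoidIndepE G (closedNbhd G u))
          (augmentMatching (avoidIndep G (closedNbhd G u)) (M u)) τ ∧ τ.card = d}.ncard := by
  have hv : {v} ∈ avoidIndep G (G.neighborSet v) := ⟨singleton_nonempty v, by simp, by simp⟩
  unfold critCount
  rw [ncard_isCritical_iUnion_fibers (φ := fun σ => σ ∩ G.neighborFinset v)
      (fun c => (isAcyclicMatching_sectorMatching hM hclique c).1)
      (insert ∅ ((G.neighborFinset v).image singleton)) ?_,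
    sum_insert (by simp), sum_image fun _ _ _ _ h => singleton_injective h]
  · congr 1
    · rw [indepComplex_sep_inter_neighborFinset_eq_empty, sectorMatching_empty,
        ncard_isCritical_coneMatching (isComplex_avoidIndep _ _) hv]
    · refine sum_congr rfl fun u hu => ?_
      have hu : u ∈ G.neighborSet v := by simpa using hu
      rw [indepComplex_sep_inter_neighborFinset_eq_singleton hclique hu,
        sectorMatching_singleton hu]
      exact ncard_isCritical_liftMatching (isAcyclicMatching_augmentMatching_avoidIndepE hM hu).1
        (fun _ => notMem_of_mem_avoidIndepE_closedNbhd) d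
  · intro σ hσ
    rcases inter_neighborFinset_eq_empty_or_singleton hclique hσ with h | ⟨u, hu, h⟩
    · simp [h]
    · simp [h, (G.mem_neighborSet v u).1 hu]

theorem critCount_iUnion_sectorMatching_zero [DecidablePred (IsUniversal G)] :
    critCount (indepComplex G) (⋃ c, sectorMatching G v M c) 0 =
      1 + #{u ∈ G.neighborFinset v | IsUniversal G u} := by
  rw [critCount_iUnion_sectorMatching hM hclique, if_pos rfl, card_filter]
  refine congrArg _ (sum_congr rfl fun u hu => ?_)
  rw [← insert_empty_avoidIndep, ncard_isCritical_augmentMatching_card_zero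
    (isComplex_avoidIndep G _) (hM u (by simpa using hu))]
  exact if_congr avoidIndep_closedNbhd_eq_empty_iff rfl rfl

theorem critCount_iUnion_sectorMatching_succ (d : ℕ) :
    critCount (indepComplex G) (⋃ c, sectorMatching G v M c) (d + 1) =
      ∑ u ∈ G.neighborFinset v, critCount (insert ∅ (avoidIndep G (closedNbhd G u)))
        (augmentMatching (avoidIndep G (closedNbhd G u)) (M u)) d := by
  rw [critCount_iUnion_sectorMatching hM hclique, if_neg d.succ_ne_zero, zero_add]
  simp only [insert_empty_avoidIndep]
  rfl

end Sectors

section Universal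

variable {V : Type*} {G : SimpleGraph V} {v : V}

theorem not_isUniversal_of_closedNbhd_ssubset (h : closedNbhd G v ⊂ Set.univ) :
    ¬ IsUniversal G v := by
  intro hv
  obtain ⟨w, -, hw⟩ := Set.exists_of_ssubset h
  by_cases hwv : w = v
  · exact hw (by rw [hwv]; exact Set.mem_insert v _)
  · exact hw (Set.mem_insert_of_mem _ (hv w hwv))

theorem ncard_setOf_isUniversal [Fintype V] [DecidableRel G.Adj] [DecidablePred (IsUniversal G)]
    (hv : ¬ IsUniversal G v) :
    {u | IsUniversal G u}.ncard = #{u ∈ G.neighborFinset v | IsUniversal G u} := by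
  rw [← Set.ncard_coe_finset]
  congr 1
  ext u
  simp only [coe_filter, SimpleGraph.mem_neighborFinset, Set.mem_ofPred_eq]
  exact ⟨fun hu => ⟨(hu v fun h => hv (h ▸ hu)).symm, hu⟩, And.right⟩

theorem SimpleGraph.natCard_connectedComponent_of_isolated [Finite V] (H : SimpleGraph V)
    {I : Set V} (hI : ∀ u ∈ I, ∀ w, ¬ H.Adj u w) (hv : v ∉ I)
    (hreach : ∀ w ∉ I, H.Reachable v w) : Nat.card H.ConnectedComponent = I.ncard + 1 := by
  have hiso : ∀ u ∈ I, ∀ w, H.Reachable u w → u = w := by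
    rintro u hu w ⟨p⟩
    cases p with
    | nil => rfl
    | cons h _ => exact (hI u hu _ h).elim
  let f : Option I → H.ConnectedComponent := fun o =>
    o.elim (H.connectedComponentMk v) fun u => H.connectedComponentMk u
  have hf : f.Bijective := by
    refine ⟨?_, fun C => ?_⟩
    · rintro (_ | ⟨u, hu⟩) (_ | ⟨w, hw⟩) h <;>
        simp only [f, Option.elim, ConnectedComponent.eq] at h
      · rfl
      · exact (hv (hiso w hw v h.symm ▸ hw)).elim
      · exact (hv (hiso u hu v h ▸ hu)).elim
      · exact congrArg some (Subtype.ext (hiso u hu w h))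
    · induction C using ConnectedComponent.ind with
      | h w =>
        by_cases hw : w ∈ I
        · exact ⟨some ⟨w, hw⟩, rfl⟩
        · exact ⟨none, ConnectedComponent.eq.2 (hreach w hw)⟩
  rw [← Nat.card_congr (Equiv.ofBijective f hf), Finite.card_option, Nat.card_coe_set_eq]

theorem natCard_connectedComponent_compl [Finite V] (h : closedNbhd G v ⊂ Set.univ)
    (hclique : ∀ x ∈ closedNbhd G v, ∀ y ∈ closedNbhd G v, x ≠ y → G.Adj x y) :
    Nat.card Gᶜ.ConnectedComponent = {u | IsUniversal G u}.ncard + 1 := by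
  refine Gᶜ.natCard_connectedComponent_of_isolated (v := v) (fun u hu w huw => ?_)
    (not_isUniversal_of_closedNbhd_ssubset h) fun w hw => ?_
  · rw [SimpleGraph.compl_adj] at huw
    exact huw.2 (hu w huw.1.symm)
  obtain ⟨z, hzw, hwz⟩ : ∃ z, z ≠ w ∧ ¬ G.Adj w z := by simpa [IsUniversal] using hw
  by_cases hvw : G.Adj v w
  · -- `z` is not a neighbour of `v` either, as `N[v]` is a clique
    have hzv : z ≠ v := fun h => hwz (h ▸ hvw.symm)
    have hvz : ¬ G.Adj v z := fun hvz => hwz (hclique w (Or.inr hvw) z (Or.inr hvz) hzw.symm)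
    exact ((G.compl_adj _ _).2 ⟨hzv.symm, hvz⟩).reachable.trans
      ((G.compl_adj _ _).2 ⟨hzw, fun h => hwz h.symm⟩).reachable
  · by_cases hwv : w = v
    · exact hwv ▸ SimpleGraph.Reachable.refl _
    · exact ((G.compl_adj _ _).2 ⟨Ne.symm hwv, hvw⟩).reachable

end Universal

theorem stmt_6_general {V : Type*} [Fintype V] [DecidableEq V] (G : SimpleGraph V)
    [DecidableRel G.Adj] (v : V)
    (h2 : closedNbhd G v ⊂ Set.univ)
    (hclique : ∀ x ∈ closedNbhd G v, ∀ y ∈ closedNbhd G v, x ≠ y → G.Adj x y)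
    (M : V → Set (Finset V × Finset V))
    (hM : ∀ u ∈ G.neighborSet v,
      IsAcyclicMatching (avoidIndep G (closedNbhd G u)) (M u)) :
    ∃ W, IsAcyclicMatching (indepComplex G) W ∧
      (critCount (indepComplex G) W 0 = 1 + {u | IsUniversal G u}.ncard ∧
        1 + {u | IsUniversal G u}.ncard = Nat.card Gᶜ.ConnectedComponent) ∧
      ((critCount (indepComplex G) W 1 : ℤ) =
        (∑ u ∈ G.neighborFinset v,
            (critCount (avoidIndep G (closedNbhd G u)) (M u) 0 : ℤ)) -
          (((G.neighborFinset v).card : ℤ) - ({u | IsUniversal G u}.ncard : ℤ))) ∧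
      ∀ t, 2 ≤ t → critCount (indepComplex G) W t =
        ∑ u ∈ G.neighborFinset v, critCount (avoidIndep G (closedNbhd G u)) (M u) (t - 1) := by
  classical
  have hk := ncard_setOf_isUniversal (not_isUniversal_of_closedNbhd_ssubset h2)
  refine ⟨⋃ c, sectorMatching G v M c, isAcyclicMatching_iUnion_sectorMatching hM hclique,
    ⟨by rw [critCount_iUnion_sectorMatching_zero hM hclique, hk], ?_⟩, ?_, fun t ht => ?_⟩
  · rw [natCard_connectedComponent_compl h2 hclique, add_comm]
  · have h1 := critCount_iUnion_sectorMatching_succ hM hclique 0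
    have hsum := sum_critCount_augmentMatching_zero (G := G) hM
    have hsplit :=
      card_filter_add_card_filter_not (s := G.neighborFinset v) (fun u => IsUniversal G u)
    rw [zero_add] at h1
    rw [h1, hk, ← Nat.cast_sum, ← hsum]
    push_cast
    omega
  · obtain ⟨d, rfl⟩ : ∃ d, t = d + 1 + 1 := ⟨t - 2, by omega⟩
    rw [critCount_iUnion_sectorMatching_succ hM hclique, Nat.add_sub_cancel]
    refine sum_congr rfl fun u hu => ?_
    exact critCount_augmentMatching_succ (isComplex_avoidIndep G _) (hM u (by simpa using hu)) d

theorem stmt_6 {V : Type*} [Fintype V] [DecidableEq V] (G : SimpleGraph V)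
    [DecidableRel G.Adj] (v : V)
    (h1 : ({v} : Set V) ⊂ closedNbhd G v) (h2 : closedNbhd G v ⊂ Set.univ)
    (hclique : ∀ x ∈ closedNbhd G v, ∀ y ∈ closedNbhd G v, x ≠ y → G.Adj x y)
    (M : V → Set (Finset V × Finset V))
    (hM : ∀ u ∈ G.neighborSet v,
      IsAcyclicMatching (avoidIndep G (closedNbhd G u)) (M u)) :
    ∃ W, IsAcyclicMatching (indepComplex G) W ∧
      (critCount (indepComplex G) W 0 = 1 + {u | IsUniversal G u}.ncard ∧
        1 + {u | IsUniversal G u}.ncard = Nat.card Gᶜ.ConnectedComponent) ∧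
      ((critCount (indepComplex G) W 1 : ℤ) =
        (∑ u ∈ G.neighborFinset v,
            (critCount (avoidIndep G (closedNbhd G u)) (M u) 0 : ℤ)) -
          (((G.neighborFinset v).card : ℤ) - ({u | IsUniversal G u}.ncard : ℤ))) ∧
      ∀ t, 2 ≤ t → critCount (indepComplex G) W t =
        ∑ u ∈ G.neighborFinset v, critCount (avoidIndep G (closedNbhd G u)) (M u) (t - 1) :=
  stmt_6_general G v h2 hclique M hM
end

section
/- A finite simple graph G is chordal if and only if it admits a perfect elimination ordering, i.e., an ordering v₁, v₂, …, v_n of V(G) such that for each i, the set {v_j : j > i, v_j adjacent to v_i} is a clique. -/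
open Finset

/-!
A perfect elimination ordering forces chordality: on an induced cycle of length at least four,
the vertex that comes first has its two cycle neighbours later, so they would be adjacent.

Conversely it suffices that a chordal graph has a simplicial vertex: put it first and recurse.
We prove more, by induction on a finite vertex set `s`: every clique `K` missing a vertex of `s`
misses a vertex that is simplicial in `G[s]`. Given `x ∈ s` with a non-neighbour `y ∈ s`, let
`C` be the component of `y` in `G[s] - N[x]` and `S` the vertices of `s` outside `C` with a
neighbour in `C`. Each vertex of `S` is adjacent to `x`, and two nonadjacent ones would form,
with a shortest path between them through `C` and the apex `x`, an induced cycle of length at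
least four; so `S` is a clique. By induction `G[C ∪ S]` has a simplicial vertex outside `S`;
it lies in `C`, whose neighbours all lie in `C ∪ S`, so it is simplicial in `G[s]` and not
adjacent to `x`. Applying this twice gives two nonadjacent simplicial vertices, and one of them
avoids `K`.
-/

open SimpleGraph

namespace SimpleGraph.Walk

variable {V : Type*} {G : SimpleGraph V} {u v : V}

lemma adj_getVert_iff_of_length_eq_dist (p : G.Walk u v) (hp : p.length = G.dist u v)
    {i j : ℕ} (hij : i < j) (hj : j ≤ p.length) :
    G.Adj (p.getVert i) (p.getVert j) ↔ j = i + 1 := by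
  refine ⟨fun hadj => ?_, ?_⟩
  · have := G.dist_le ((p.take i).append (.cons hadj (p.drop j)))
    simp only [length_append, length_cons, take_length, drop_length] at this
    omega
  · rintro rfl
    exact p.adj_getVert_succ (by omega)

end SimpleGraph.Walk

lemma ZMod.natCast_ne_zero_of_pos_of_lt {n k : ℕ} (hk : 0 < k) (hkn : k < n) :
    (k : ZMod n) ≠ 0 :=
  (ZMod.natCast_eq_zero_iff k n).not.2 (Nat.not_dvd_of_pos_of_lt hk hkn)

lemma ZMod.eq_add_one_iff_val {n : ℕ} [NeZero n] (hn : 1 < n) (i j : ZMod n) :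
    j = i + 1 ↔ j.val = i.val + 1 ∨ (i.val = n - 1 ∧ j.val = 0) := by
  have : Fact (1 < n) := ⟨hn⟩
  have hi := ZMod.val_lt i
  have hj := ZMod.val_lt j
  rw [← (ZMod.val_injective n).eq_iff, ZMod.val_add, ZMod.val_one]
  rcases Nat.lt_or_ge (i.val + 1) n with h | h
  · rw [Nat.mod_eq_of_lt h]; omega
  · rw [show i.val + 1 = n by omega, Nat.mod_self]; omega

section

variable {V : Type*} {G : SimpleGraph V}

def IsPerfectEliminationOrder {n : ℕ} (G : SimpleGraph V) (e : Fin n ≃ V) : Prop :=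
  ∀ i j k : Fin n, i < j → i < k → j ≠ k →
    G.Adj (e i) (e j) → G.Adj (e i) (e k) → G.Adj (e j) (e k)

theorem IsPerfectEliminationOrder.chordal {n : ℕ} {e : Fin n ≃ V}
    (he : IsPerfectEliminationOrder G e) : Chordal G := by
  rintro ⟨m, hm, f, hf, hadj⟩
  have : NeZero m := ⟨by omega⟩
  have h₁ : (1 : ZMod m) ≠ 0 :=
    mod_cast ZMod.natCast_ne_zero_of_pos_of_lt (k := 1) (by omega) (by omega)
  have h₂ : (2 : ZMod m) ≠ 0 :=
    mod_cast ZMod.natCast_ne_zero_of_pos_of_lt (k := 2) (by omega) (by omega)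
  have h₃ : (3 : ZMod m) ≠ 0 :=
    mod_cast ZMod.natCast_ne_zero_of_pos_of_lt (k := 3) (by omega) (by omega)
  set r := fun i => e.symm (f i)
  have hr : Function.Injective r := e.symm.injective.comp hf
  obtain ⟨i, -, hi⟩ := Finset.exists_min_image Finset.univ r Finset.univ_nonempty
  have hlt : ∀ j, j ≠ i → r i < r j := fun j hj =>
    (hi j (Finset.mem_univ j)).lt_of_ne fun h => hj (hr h).symm
  have key := he (r i) (r (i + 1)) (r (i - 1))
    (hlt _ fun h => h₁ (by linear_combination h)) (hlt _ fun h => h₁ (by linear_combination -h))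
    (fun h => h₂ (by linear_combination hr h))
    (by simpa [r] using (hadj i (i + 1)).2 (.inl rfl))
    (by simpa [r] using (hadj i (i - 1)).2 (.inr (by ring)))
  simp only [r, Equiv.apply_symm_apply] at key
  rcases (hadj _ _).1 key with h | h
  · exact h₃ (by linear_combination -h)
  · exact h₁ (by linear_combination h)

lemma Chordal.comap {W : Type*} {H : SimpleGraph W} (hH : Chordal H) {f : V → W}
    (hf : Function.Injective f) : Chordal (H.comap f) :=
  fun ⟨n, hn, g, hg, hadj⟩ => hH ⟨n, hn, f ∘ g, hf.comp hg, hadj⟩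

lemma not_chordal_of_cycle {n : ℕ} (hn : 4 ≤ n) (g : ℕ → V) (hg : Set.InjOn g (Set.Iio n))
    (hadj : ∀ a b, a < b → b < n → (G.Adj (g a) (g b) ↔ b = a + 1 ∨ (a = 0 ∧ b = n - 1))) :
    ¬ Chordal G := by
  have : NeZero n := ⟨by omega⟩
  refine fun hG => hG ⟨n, hn, fun i => g i.val,
    fun i j h => ZMod.val_injective n (hg (ZMod.val_lt i) (ZMod.val_lt j) h), fun i j => ?_⟩
  have hi := ZMod.val_lt i
  have hj := ZMod.val_lt j
  rw [ZMod.eq_add_one_iff_val (by omega), ZMod.eq_add_one_iff_val (by omega)]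
  rcases lt_trichotomy i.val j.val with h | h | h
  · rw [hadj _ _ h hj]; omega
  · simp only [h, G.irrefl, false_iff]; omega
  · rw [G.adj_comm, hadj _ _ h hi]; omega

lemma not_chordal_of_path_of_apex {m : ℕ} (hm : 2 ≤ m) (g : ℕ → V) (x : V)
    (hg : Set.InjOn g (Set.Iic m)) (hgx : ∀ i ≤ m, g i ≠ x)
    (hpath : ∀ i j, i < j → j ≤ m → (G.Adj (g i) (g j) ↔ j = i + 1))
    (hapex : ∀ i ≤ m, G.Adj (g i) x ↔ i = 0 ∨ i = m) : ¬ Chordal G := by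
  refine not_chordal_of_cycle (n := m + 2) (by omega) (fun k => if k = m + 1 then x else g k)
    (fun a ha b hb hab => ?_) (fun a b hab hb => ?_)
  · simp only [Set.mem_Iio] at ha hb hab
    split_ifs at hab with h₁ h₂ h₂
    · omega
    · exact absurd hab.symm (hgx b (by omega))
    · exact absurd hab (hgx a (by omega))
    · exact hg (show a ≤ m by omega) (show b ≤ m by omega) hab
  · simp only [if_neg (show a ≠ m + 1 by omega)]
    split_ifs with h
    · rw [hapex a (by omega)]; omega
    · rw [hpath a b hab (by omega)]; omega

lemma Chordal.adj_of_reachable_of_forall_not_adj (hG : Chordal G) {x s₁ s₂ : V} {A : Set V}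
    (hA : ∀ a ∈ A, a ≠ x ∧ ¬ G.Adj a x) (h₁ : G.Adj s₁ x) (h₂ : G.Adj s₂ x) (hne : s₁ ≠ s₂)
    (hreach : (G.induce (insert s₁ (insert s₂ A))).Reachable ⟨s₁, by simp⟩ ⟨s₂, by simp⟩) :
    G.Adj s₁ s₂ := by
  by_contra hnadj
  obtain ⟨q, hq, hlen⟩ := hreach.exists_path_of_dist
  have hm : 1 < q.length :=
    hlen ▸ hreach.one_lt_dist_of_ne_of_not_adj (by simpa using hne) hnadj
  have hinj : Set.InjOn (fun k => (q.getVert k : V)) (Set.Iic q.length) :=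
    fun i hi j hj h => hq.getVert_injOn hi hj (Subtype.ext h)
  have hint : ∀ i, 0 < i → i < q.length → (q.getVert i : V) ∈ A := by
    intro i hi0 hil
    rcases (q.getVert i).2 with h | h | h
    · exact absurd (hinj (Set.mem_Iic.2 hil.le) (Set.mem_Iic.2 (Nat.zero_le _))
        (by simpa using h)) hi0.ne'
    · exact absurd (hinj (Set.mem_Iic.2 hil.le) (Set.mem_Iic.2 le_rfl) (by simpa using h))
        hil.ne
    · exact h
  refine not_chordal_of_path_of_apex hm (fun k => (q.getVert k : V)) x hinj ?_
    (fun i j hij hj => q.adj_getVert_iff_of_length_eq_dist hlen hij hj) ?_ hG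
  · intro i hi
    rcases Nat.eq_zero_or_pos i with rfl | hi0
    · simpa using h₁.ne
    rcases hi.lt_or_eq with hil | rfl
    · exact (hA _ (hint i hi0 hil)).1
    · simpa using h₂.ne
  · intro i hi
    rcases Nat.eq_zero_or_pos i with rfl | hi0
    · simpa using h₁
    rcases hi.lt_or_eq with hil | rfl
    · simpa [(hA _ (hint i hi0 hil)).2] using ⟨hi0.ne', hil.ne⟩
    · simpa using h₂

lemma Chordal.exists_isClique_neighborSet_inter_of_not_adj (hG : Chordal G) {s : Finset V}
    (ih : ∀ t ⊂ s, ∀ K : Set V, G.IsClique K → ∀ y ∈ t, y ∉ K →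
      ∃ v ∈ t, v ∉ K ∧ G.IsClique (G.neighborSet v ∩ t))
    {x y : V} (hx : x ∈ s) (hy : y ∈ s) (hyx : y ≠ x) (hnadj : ¬ G.Adj y x) :
    ∃ v ∈ s, v ≠ x ∧ ¬ G.Adj v x ∧ G.IsClique (G.neighborSet v ∩ s) := by
  classical
  set A : Set V := {a | a ∈ s ∧ a ≠ x ∧ ¬ G.Adj a x}
  have hyA : y ∈ A := ⟨hy, hyx, hnadj⟩
  set C : Set V := {c | ∃ hc : c ∈ A, (G.induce A).Reachable ⟨y, hyA⟩ ⟨c, hc⟩}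
  set S : Set V := {w | w ∈ s ∧ w ∉ C ∧ ∃ c ∈ C, G.Adj c w}
  have hSx : ∀ w ∈ S, G.Adj w x := by
    rintro w ⟨hws, hwC, c, ⟨hcA, hc⟩, hcw⟩
    by_contra hwx
    have hwA : w ∈ A := ⟨hws, by rintro rfl; exact hcA.2.2 hcw, hwx⟩
    exact hwC ⟨hwA, hc.trans (Adj.reachable (G := G.induce A) hcw)⟩
  have hS : G.IsClique S := by
    intro w₁ hw₁ w₂ hw₂ hne
    obtain ⟨c₁, ⟨hc₁, hr₁⟩, h₁⟩ := hw₁.2.2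
    obtain ⟨c₂, ⟨hc₂, hr₂⟩, h₂⟩ := hw₂.2.2
    have hsub : A ⊆ insert w₁ (insert w₂ A) := fun a ha => by simp [ha]
    have e₁ : (G.induce _).Adj ⟨w₁, by simp⟩ ⟨c₁, hsub hc₁⟩ := h₁.symm
    have e₂ : (G.induce _).Adj ⟨c₂, hsub hc₂⟩ ⟨w₂, by simp⟩ := h₂
    refine hG.adj_of_reachable_of_forall_not_adj (A := A) (fun a ha => ha.2)
      (hSx _ hw₁) (hSx _ hw₂) hne ?_
    have hc := (hr₁.symm.trans hr₂).map (induceHomOfLE G hsub).toHom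
    exact e₁.reachable.trans (hc.trans e₂.reachable)
  set t := s.filter (· ∈ C ∪ S)
  have hts : t ⊂ s := by
    refine Finset.filter_ssubset.2 ⟨x, hx, ?_⟩
    rintro (⟨hxA, -⟩ | hxS)
    · exact hxA.2.1 rfl
    · exact G.irrefl (hSx x hxS)
  have hyC : y ∈ C := ⟨hyA, .refl _⟩
  obtain ⟨v, hvt, hvS, hv⟩ :=
    ih t hts S hS y (Finset.mem_filter.2 ⟨hy, .inl hyC⟩) fun hyS => hyS.2.1 hyC
  have hvC : v ∈ C := ((Finset.mem_filter.1 hvt).2).resolve_right hvS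
  obtain ⟨hvs, hvx, hvnadj⟩ := hvC.1
  refine ⟨v, hvs, hvx, hvnadj, hv.subset ?_⟩
  rintro w ⟨hvw, hws⟩
  refine ⟨hvw, ?_⟩
  by_cases hwC : w ∈ C
  · exact Finset.mem_filter.2 ⟨hws, .inl hwC⟩
  · exact Finset.mem_filter.2 ⟨hws, .inr ⟨hws, hwC, v, hvC, hvw⟩⟩

theorem Chordal.exists_isClique_neighborSet_inter_of_notMem (hG : Chordal G) (s : Finset V) :
    ∀ K : Set V, G.IsClique K → ∀ y ∈ s, y ∉ K →
      ∃ v ∈ s, v ∉ K ∧ G.IsClique (G.neighborSet v ∩ s) := by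
  induction s using Finset.strongInduction with
  | H s ih =>
  intro K hK y hys hyK
  by_cases hs : G.IsClique (s : Set V)
  · exact ⟨y, hys, hyK, hs.subset Set.inter_subset_right⟩
  obtain ⟨a, ha, b, hb, hab, hnadj⟩ : ∃ a ∈ s, ∃ b ∈ s, a ≠ b ∧ ¬ G.Adj a b := by
    simpa [IsClique, Set.Pairwise] using hs
  obtain ⟨v, hvs, hvb, hvnadj, hv⟩ :=
    hG.exists_isClique_neighborSet_inter_of_not_adj ih hb ha hab hnadj
  obtain ⟨w, hws, hwv, hwnadj, hw⟩ :=
    hG.exists_isClique_neighborSet_inter_of_not_adj ih hvs hb hvb.symm fun h => hvnadj h.symm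
  by_cases hvK : v ∈ K
  · exact ⟨w, hws, fun hwK => hwnadj (hK hwK hvK hwv), hw⟩
  · exact ⟨v, hvs, hvK, hv⟩

theorem Chordal.exists_isClique_neighborSet [Fintype V] [Nonempty V] (hG : Chordal G) :
    ∃ v, G.IsClique (G.neighborSet v) := by
  obtain ⟨v, -, -, hv⟩ := hG.exists_isClique_neighborSet_inter_of_notMem Finset.univ ∅
    isClique_empty (Classical.arbitrary V) (Finset.mem_univ _) (Set.notMem_empty _)
  exact ⟨v, by simpa using hv⟩

/-- Eliminate `v` first, then the other vertices in the order `e`. -/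
lemma IsPerfectEliminationOrder.cons [DecidableEq V] {n : ℕ} {v : V}
    (hv : G.IsClique (G.neighborSet v))
    {e : Fin n ≃ {w // w ≠ v}} (he : IsPerfectEliminationOrder (G.comap Subtype.val) e) :
    IsPerfectEliminationOrder G
      ((finSuccEquiv n).trans ((Equiv.optionCongr e).trans (Equiv.optionSubtypeNe v))) := by
  intro i j k hij hik hjk
  cases j using Fin.cases with
  | zero => exact absurd hij (Fin.not_lt_zero i)
  | succ j =>
  cases k using Fin.cases with
  | zero => exact absurd hik (Fin.not_lt_zero i)
  | succ k =>
  cases i using Fin.cases with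
  | zero =>
    exact fun h₁ h₂ => hv h₁ h₂ fun h => hjk (congrArg Fin.succ (e.injective (Subtype.ext h)))
  | succ i =>
    exact he i j k (Fin.succ_lt_succ_iff.1 hij) (Fin.succ_lt_succ_iff.1 hik)
      (fun h => hjk (congrArg Fin.succ h))

theorem Chordal.exists_isPerfectEliminationOrder [Fintype V] (hG : Chordal G) :
    ∃ e : Fin (Fintype.card V) ≃ V, IsPerfectEliminationOrder G e := by
  classical
  induction h : Fintype.card V generalizing V with
  | zero =>
    exact ⟨(Fintype.equivFinOfCardEq h).symm, fun i => i.elim0⟩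
  | succ n ih =>
    have : Nonempty V := Fintype.card_pos_iff.1 (by omega)
    obtain ⟨v, hv⟩ := hG.exists_isClique_neighborSet
    have hcard : Fintype.card {w // w ≠ v} = n := by
      have := Fintype.card_congr (Equiv.optionSubtypeNe v)
      rw [Fintype.card_option] at this
      omega
    obtain ⟨e, he⟩ := ih (hG.comap Subtype.val_injective) hcard
    exact ⟨_, IsPerfectEliminationOrder.cons hv he⟩

end

theorem stmt_13_general {V : Type*} [Fintype V] (G : SimpleGraph V) :
    Chordal G ↔ ∃ e : Fin (Fintype.card V) ≃ V,
      ∀ i j k : Fin (Fintype.card V), i < j → i < k → j ≠ k →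
        G.Adj (e i) (e j) → G.Adj (e i) (e k) → G.Adj (e j) (e k) :=
  ⟨Chordal.exists_isPerfectEliminationOrder, fun ⟨_, he⟩ => IsPerfectEliminationOrder.chordal he⟩

theorem stmt_13 {V : Type*} [Fintype V] [DecidableEq V] (G : SimpleGraph V) :
    Chordal G ↔ ∃ e : Fin (Fintype.card V) ≃ V,
      ∀ i j k : Fin (Fintype.card V), i < j → i < k → j ≠ k →
        G.Adj (e i) (e j) → G.Adj (e i) (e k) → G.Adj (e j) (e k) :=
  stmt_13_general G
end

section
/- Let G ∈ 𝒢_{m,n} with m ≥ 1 and n ≥ 1, and let v ∈ V_{m,0}. Then v is a non-universal simplicial vertex of G: N_G[v] = (⨆_{i=0}^{m} V_{i,0}) ∪ (⨆_{j=1}^{n} V_{m,j}) and this set is a clique, and N_G[v] ≠ V(G). -/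
open Finset

theorem stmt_16 {V : Type*} [Fintype V] [DecidableEq V] (m n : ℕ)
    (hm : 1 ≤ m) (hn : 1 ≤ n) (G : SimpleGraph V)
    (P : V → Fin (m+1) × Fin (n+1)) (hG : GridGraph m n G P)
    (v : V) (hv : P v = (Fin.last m, 0)) :
    closedNbhd G v = {x | (P x).2 = 0 ∨ (P x).1 = Fin.last m} ∧
    (∀ x ∈ closedNbhd G v, ∀ y ∈ closedNbhd G v, x ≠ y → G.Adj x y) ∧
    closedNbhd G v ≠ Set.univ ∧ ¬ IsUniversal G v := by
  obtain ⟨hsurj, hadj⟩ := hG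
  -- membership characterization
  have hmem : ∀ x, x ∈ closedNbhd G v ↔ ((P x).2 = 0 ∨ (P x).1 = Fin.last m) := by
    intro x
    constructor
    · intro hx
      rcases hx with hx | hx
      · subst hx; left; rw [hv]
      · have := (hadj v x).1 hx
        rcases this.2 with h | h
        · right
          have h1 : (P v).1 ≤ (P x).1 := h.1
          rw [hv] at h1
          exact le_antisymm (Fin.le_last _) h1
        · left
          have h2 : (P x).2 ≤ (P v).2 := h.2
          rw [hv] at h2
          exact Fin.le_zero_iff.1 h2
    · intro hx
      by_cases hxv : x = v
      · subst hxv; exact Set.mem_insert _ _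
      · right
        show G.Adj v x
        rw [hadj]
        refine ⟨fun h => hxv h.symm, ?_⟩
        rcases hx with h | h
        · right
          refine ⟨?_, ?_⟩
          · rw [hv]; exact Fin.le_last _
          · rw [hv, h]
        · left
          refine ⟨?_, ?_⟩
          · rw [hv, h]
          · rw [hv]; exact Fin.zero_le _
  have hset : closedNbhd G v = {x | (P x).2 = 0 ∨ (P x).1 = Fin.last m} :=
    Set.ext fun x => hmem x
  refine ⟨hset, ?_, ?_, ?_⟩
  · intro x hx y hy hxy
    rw [hmem] at hx hy
    rw [hadj]
    refine ⟨hxy, ?_⟩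
    rcases hx with hx | hx <;> rcases hy with hy | hy
    · rcases le_total (P x).1 (P y).1 with h | h
      · exact Or.inl ⟨h, by rw [hx, hy]⟩
      · exact Or.inr ⟨h, by rw [hx, hy]⟩
    · exact Or.inl ⟨by rw [hy]; exact Fin.le_last _, by rw [hx]; exact Fin.zero_le _⟩
    · exact Or.inr ⟨by rw [hx]; exact Fin.le_last _, by rw [hy]; exact Fin.zero_le _⟩
    · rcases le_total (P x).2 (P y).2 with h | h
      · exact Or.inl ⟨by rw [hx, hy], h⟩
      · exact Or.inr ⟨by rw [hx, hy], h⟩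
  · -- not univ: there is a vertex with P = (0, 1)
    obtain ⟨w, hw⟩ := hsurj (0, 1)
    intro h
    have hwmem : w ∈ closedNbhd G v := h ▸ Set.mem_univ w
    rw [hmem, hw] at hwmem
    rcases hwmem with h1 | h1
    · have h1' : (1 : Fin (n+1)).val = (0 : Fin (n+1)).val := congrArg Fin.val h1
      rw [Fin.val_one', Nat.mod_eq_of_lt (by omega)] at h1'
      simp at h1'
    · have h1' : (0 : Fin (m+1)).val = (Fin.last m).val := congrArg Fin.val h1
      simp [Fin.val_last] at h1'
      omega
  · intro h
    obtain ⟨w, hw⟩ := hsurj (0, 1)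
    have hwv : w ≠ v := by
      intro he; rw [he, hv] at hw
      have := congrArg Prod.fst hw
      have h2 : (Fin.last m).val = (0 : Fin (m+1)).val := Fin.ext_iff.1 this
      simp [Fin.val_last] at h2
      omega
    have := (hadj v w).1 (h w hwv)
    rcases this.2 with hle | hle
    · have h2 : (P v).2 ≤ (P w).2 := hle.2
      have h1 : (P v).1 ≤ (P w).1 := hle.1
      rw [hv, hw] at h1
      have : (Fin.last m).val ≤ (0 : Fin (m+1)).val := h1
      simp [Fin.val_last] at this
      omega
    · have h2 : (P w).2 ≤ (P v).2 := hle.2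
      rw [hv, hw] at h2
      have h2' : ((1 : Fin (n+1))).val ≤ (0 : Fin (n+1)).val := h2
      rw [Fin.val_one', Nat.mod_eq_of_lt (by omega)] at h2'
      simp at h2'
end

section
/- Let G ∈ 𝒢_{m,n} with m ≥ 1, n ≥ 1, and let u ∈ V_{i,0} with 1 ≤ i ≤ m. Then G − N_G[u] is the induced subgraph on ⨆_{r=0}^{i−1} ⨆_{s=1}^{n} V_{r,s}, and it belongs to the class 𝒢_{i−1,n−1} (with blocks V'_{r,s} = V_{r,s+1}). -/
open Finset

theorem stmt_17 {V : Type*} [Fintype V] [DecidableEq V] (m n : ℕ)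
    (hm : 1 ≤ m) (hn : 1 ≤ n) (G : SimpleGraph V)
    (P : V → Fin (m+1) × Fin (n+1)) (hG : GridGraph m n G P)
    (i : ℕ) (hi1 : 1 ≤ i) (him : i ≤ m) (u : V)
    (hu : P u = (⟨i, by omega⟩, 0)) :
    (closedNbhd G u)ᶜ = {x | ((P x).1 : ℕ) < i ∧ 1 ≤ ((P x).2 : ℕ)} ∧
    GridGraph (i - 1) (n - 1)
      (G.induce {x | ((P x).1 : ℕ) < i ∧ 1 ≤ ((P x).2 : ℕ)})
      (fun x => (⟨((P x.1).1 : ℕ), by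
          have hx := x.2
          simp only [Set.mem_setOf_eq] at hx
          omega⟩,
        ⟨((P x.1).2 : ℕ) - 1, by
          have hx := (P x.1).2.isLt
          omega⟩)) := by
  obtain ⟨hsurj, hadj⟩ := hG
  have hu1 : ((P u).1 : ℕ) = i := by rw [hu]
  have hu2 : ((P u).2 : ℕ) = 0 := by rw [hu]; rfl
  have key : ∀ a b : Fin (m+1) × Fin (n+1), a ≤ b ↔ ((a.1:ℕ) ≤ b.1 ∧ (a.2:ℕ) ≤ b.2) := by
    intro a b; rw [Prod.le_def, Fin.le_def, Fin.le_def]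
  constructor
  · ext x
    simp only [closedNbhd, Set.mem_compl_iff, Set.mem_insert_iff,
      SimpleGraph.mem_neighborSet, Set.mem_setOf_eq, hadj, not_or]
    constructor
    · rintro ⟨hxu, hna⟩
      have hc : ¬ (P u ≤ P x ∨ P x ≤ P u) := fun h => hna ⟨Ne.symm hxu, h⟩
      rw [not_or, key, key] at hc
      omega
    · rintro ⟨ha, hb⟩
      have hxu : x ≠ u := by
        intro h; subst h; omega
      refine ⟨hxu, fun h => ?_⟩
      rcases h.2 with h' | h' <;> rw [key] at h' <;> omega
  · constructor
    · rintro ⟨r, s⟩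
      obtain ⟨x, hx⟩ := hsurj (⟨(r:ℕ), by have := r.isLt; omega⟩, ⟨(s:ℕ)+1, by have := s.isLt; omega⟩)
      have hx1 : ((P x).1 : ℕ) = r := by rw [hx]
      have hx2 : ((P x).2 : ℕ) = (s:ℕ)+1 := by rw [hx]
      refine ⟨⟨x, ?_⟩, ?_⟩
      · simp only [Set.mem_setOf_eq, hx1, hx2]
        have := r.isLt; omega
      · apply Prod.ext <;> apply Fin.ext <;> simp [hx1, hx2]
    · intro x y
      rw [show (G.induce _).Adj x y ↔ G.Adj x.1 y.1 from Iff.rfl, hadj]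
      have hx := x.2
      have hy := y.2
      simp only [Set.mem_setOf_eq] at hx hy
      constructor
      · rintro ⟨hne, hcomp⟩
        refine ⟨fun h => hne (congrArg Subtype.val h), ?_⟩
        rw [key, key] at hcomp
        rw [Prod.le_def, Prod.le_def, Fin.le_def, Fin.le_def, Fin.le_def, Fin.le_def]
        simp only
        omega
      · rintro ⟨hne, hcomp⟩
        refine ⟨fun h => hne (Subtype.ext h), ?_⟩
        rw [Prod.le_def, Prod.le_def, Fin.le_def, Fin.le_def, Fin.le_def, Fin.le_def] at hcomp
        rw [key, key]
        simp only at hcomp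
        omega
end
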